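/- arXiv:2502.04642 — 10 statements merged into one kernel-verified Lean document; each statement's English description precedes it below -/
import Mathlib

section
/- Let f : ℝⁿ → ℝ ∪ {∞} be a proper m-strongly convex function (m > 0). Then its convex conjugate f*(v) = sup_x (⟨x, v⟩ − f(x)) is finite at every v ∈ ℝⁿ (i.e. dom f* = ℝⁿ), f* is differentiable on all of ℝⁿ, and its gradient ∇f* is Lipschitz continuous with constant 1/m. -/
open scoped RealInnerProductSpace
open Filter Topology

noncomputable section

/-- `ℝⁿ` with the standard inner product. -/
abbrev Eu (n : ℕ) : Type := EuclideanSpace ℝ (Fin n)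

/-- The (effective) domain of an extended-real-valued function. -/
def edom {n : ℕ} (g : Eu n → EReal) : Set (Eu n) := {x | g x < ⊤}

/-- A function `ℝⁿ → ℝ ∪ {∞}` is proper: it takes values in `ℝ ∪ {∞}` (never `-∞`)
and is not identically `∞`. -/
def ProperFn {n : ℕ} (g : Eu n → EReal) : Prop := (∀ x, ⊥ < g x) ∧ ∃ x, g x < ⊤

/-- A function is closed if its epigraph is a closed set. -/
def ClosedFn {n : ℕ} (g : Eu n → EReal) : Prop :=
  IsClosed {p : Eu n × ℝ | g p.1 ≤ (p.2 : EReal)}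

/-- Convexity for extended-real-valued functions. -/
def ConvexFn {n : ℕ} (g : Eu n → EReal) : Prop :=
  ∀ x y : Eu n, ∀ a b : ℝ, 0 ≤ a → 0 ≤ b → a + b = 1 →
    g (a • x + b • y) ≤ (a : EReal) * g x + (b : EReal) * g y

/-- `m`-strong convexity: `g - (m/2)‖·‖²` is convex, and the domain of `g` is convex. -/
def StrongConvexFn {n : ℕ} (m : ℝ) (g : Eu n → EReal) : Prop :=
  Convex ℝ (edom g) ∧ ConvexFn (fun x => g x - ((m / 2 * ‖x‖ ^ 2 : ℝ) : EReal))

/-- The subdifferential of `g` at `x`: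
`∂g(x) = {v : g(z) ≥ g(x) + ⟨v, z − x⟩ for all z}`. -/
def subdiff {n : ℕ} (g : Eu n → EReal) (x : Eu n) : Set (Eu n) :=
  {v | ∀ z, g x + ((⟪v, z - x⟫ : ℝ) : EReal) ≤ g z}

/-- `w` is the unique minimizer of `h`. -/
def IsUniqueMin {n : ℕ} (h : Eu n → EReal) (w : Eu n) : Prop :=
  ∀ z, z ≠ w → h w < h z

/-- `K` is a closed convex cone. -/
def IsClosedConvexCone {r : ℕ} (K : Set (Eu r)) : Prop :=
  IsClosed K ∧ Convex ℝ K ∧ ∀ c : ℝ, 0 ≤ c → ∀ x ∈ K, c • x ∈ K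

/-- The dual cone `K* = {v : ⟨v, x⟩ ≥ 0 for all x ∈ K}`. -/
def dualConeSet {r : ℕ} (K : Set (Eu r)) : Set (Eu r) := {v | ∀ x ∈ K, 0 ≤ ⟪v, x⟫}

/-- `φ` is `K`-convex: `φ(αx + (1−α)y) ≼_K αφ(x) + (1−α)φ(y)`. -/
def KConvexFn {n r : ℕ} (K : Set (Eu r)) (φ : Eu n → Eu r) : Prop :=
  ∀ x y : Eu n, ∀ a b : ℝ, 0 ≤ a → 0 ≤ b → a + b = 1 →
    a • φ x + b • φ y - φ (a • x + b • y) ∈ K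

/-- The dual function `ḡ*(λ) = inf_w (g(w) + ⟨λ, φ(w)⟩)`. -/
def dualFn {n r : ℕ} (g : Eu n → EReal) (φ : Eu n → Eu r) (lam : Eu r) : EReal :=
  ⨅ w : Eu n, (g w + ((⟪lam, φ w⟫ : ℝ) : EReal))

/-- The convex conjugate `f*(v) = sup_x (⟨x, v⟩ − f(x))`. -/
def econj {n : ℕ} (f : Eu n → EReal) (v : Eu n) : EReal :=
  ⨆ x : Eu n, (((⟪x, v⟫ : ℝ) : EReal) - f x)

namespace Stmt0Aux

variable {n : ℕ}

/-- Real-valued `m`-strong convexity on a set. -/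
def SC (m : ℝ) (S : Set (Eu n)) (F : Eu n → ℝ) : Prop :=
  ∀ ⦃x⦄, x ∈ S → ∀ ⦃y⦄, y ∈ S → ∀ a b : ℝ, 0 ≤ a → 0 ≤ b → a + b = 1 →
    F (a • x + b • y) ≤ a * F x + b * F y - m / 2 * (a * b) * ‖x - y‖ ^ 2

lemma SC.convexOn {m : ℝ} (hm : 0 ≤ m) {S : Set (Eu n)} {F : Eu n → ℝ}
    (h : SC m S F) (hS : Convex ℝ S) : ConvexOn ℝ S F := by
  refine ⟨hS, fun x hx y hy a b ha hb hab => ?_⟩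
  have := h hx hy a b ha hb hab
  simp only [smul_eq_mul]
  nlinarith [mul_nonneg (mul_nonneg (by linarith : (0:ℝ) ≤ m / 2) (mul_nonneg ha hb)) (sq_nonneg ‖x - y‖)]

lemma SC.tilt {m : ℝ} {S : Set (Eu n)} {F : Eu n → ℝ} (h : SC m S F) (v : Eu n) :
    SC m S (fun x => F x - ⟪x, v⟫) := by
  intro x hx y hy a b ha hb hab
  have h1 := h hx hy a b ha hb hab
  have h2 : ⟪a • x + b • y, v⟫ = a * ⟪x, v⟫ + b * ⟪y, v⟫ := by
    rw [inner_add_left, real_inner_smul_left, real_inner_smul_left]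
  simp only [h2]
  linarith

set_option maxHeartbeats 1000000 in
/-- Upper bound near an intrinsic interior point. -/
lemma exists_rel_ball_bound {m : ℝ} (hm : 0 < m) {S : Set (Eu n)} {F : Eu n → ℝ}
    (hS : Convex ℝ S) (h : SC m S F) {z : Eu n}
    (hz : z ∈ intrinsicInterior ℝ S) :
    ∃ ε > 0, ∃ M : ℝ, ∀ u : Eu n, u ∈ affineSpan ℝ S → ‖u - z‖ < ε → u ∈ S ∧ F u ≤ M := by
  obtain ⟨y, hy, hyz⟩ := mem_intrinsicInterior.1 hz
  have hzS : z ∈ S := by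
    have hpre : y ∈ (Subtype.val ⁻¹' S : Set (affineSpan ℝ S)) := interior_subset hy
    rw [Set.mem_preimage, hyz] at hpre
    exact hpre
  have hzA : z ∈ affineSpan ℝ S := subset_affineSpan ℝ S hzS
  obtain ⟨ε, hε, hball⟩ := Metric.isOpen_iff.1 isOpen_interior y hy
  set W := (affineSpan ℝ S).direction with hW
  have memS : ∀ w : W, ‖w‖ < ε → z + (w : Eu n) ∈ S := by
    intro w hw
    have hmem : z + (w : Eu n) ∈ affineSpan ℝ S := by
      have := AffineSubspace.vadd_mem_of_mem_direction w.2 hzA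
      simpa [vadd_eq_add, add_comm] using this
    have hdist : (⟨z + (w : Eu n), hmem⟩ : affineSpan ℝ S) ∈ Metric.ball y ε := by
      rw [Metric.mem_ball, Subtype.dist_eq]
      simp only [hyz]
      rw [dist_eq_norm]
      simpa using hw
    have hmemS : (⟨z + (w : Eu n), hmem⟩ : affineSpan ℝ S) ∈
        (Subtype.val ⁻¹' S : Set (affineSpan ℝ S)) := interior_subset (hball hdist)
    exact hmemS
  set Fh : W → ℝ := fun w => F (z + (w : Eu n)) with hFh
  have hconv : ConvexOn ℝ (Metric.ball (0 : W) ε) Fh := by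
    refine ⟨convex_ball _ _, ?_⟩
    intro w1 h1 w2 h2 a b ha hb hab
    have hn1 : ‖w1‖ < ε := by simpa [dist_zero_right] using (Metric.mem_ball.1 h1)
    have hn2 : ‖w2‖ < ε := by simpa [dist_zero_right] using (Metric.mem_ball.1 h2)
    have e : z + ((a • w1 + b • w2 : W) : Eu n)
        = a • (z + (w1 : Eu n)) + b • (z + (w2 : Eu n)) := by
      push_cast
      have hz1 : z = a • z + b • z := by rw [← add_smul, hab, one_smul]
      rw [smul_add, smul_add]
      nth_rewrite 1 [hz1]
      abel
    have hs := h (memS w1 hn1) (memS w2 hn2) a b ha hb hab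
    simp only [hFh, smul_eq_mul, e]
    nlinarith [mul_nonneg (mul_nonneg (by linarith [hm.le] : (0:ℝ) ≤ m / 2)
      (mul_nonneg ha hb)) (sq_nonneg ‖(z + (w1 : Eu n)) - (z + (w2 : Eu n))‖)]
  have hcont : ContinuousOn Fh (Metric.ball (0 : W) ε) :=
    hconv.continuousOn Metric.isOpen_ball
  have hca : ContinuousAt Fh 0 :=
    hcont.continuousAt (Metric.isOpen_ball.mem_nhds (by simpa using hε))
  obtain ⟨δ, hδ, hδ2⟩ := Metric.continuousAt_iff.1 hca 1 one_pos
  refine ⟨min δ ε, lt_min hδ hε, Fh 0 + 1, ?_⟩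
  intro u huA hu
  have hwW : u - z ∈ W := by
    have := AffineSubspace.vsub_mem_direction huA hzA
    simpa [vsub_eq_sub] using this
  set w : W := ⟨u - z, hwW⟩ with hwdef
  have hnw : ‖w‖ = ‖u - z‖ := Submodule.coe_norm w
  have hwu : z + (w : Eu n) = u := by
    show z + (u - z) = u
    abel
  have hwε : ‖w‖ < ε := by rw [hnw]; exact lt_of_lt_of_le hu (min_le_right _ _)
  have hwδ : ‖w‖ < δ := by rw [hnw]; exact lt_of_lt_of_le hu (min_le_left _ _)
  have huS : u ∈ S := by rw [← hwu]; exact memS w hwε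
  refine ⟨huS, ?_⟩
  have hd : dist w (0 : W) < δ := by rw [dist_zero_right]; exact hwδ
  have habs : |Fh w - Fh 0| < 1 := by
    have h2 := hδ2 hd
    rwa [Real.dist_eq] at h2
  have : Fh w ≤ Fh 0 + 1 := by
    have := abs_lt.1 habs
    linarith [this.2]
  rw [← hwu]
  exact this

set_option maxHeartbeats 1000000 in
/-- A strongly convex function is bounded below on its (convex) domain. -/
lemma SC.bddBelow {m : ℝ} (hm : 0 < m) {S : Set (Eu n)} {F : Eu n → ℝ}
    (hS : Convex ℝ S) (hne : S.Nonempty) (h : SC m S F) :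
    ∃ B : ℝ, ∀ x ∈ S, B ≤ F x := by
  obtain ⟨z, hz⟩ := Set.Nonempty.intrinsicInterior hS hne
  obtain ⟨ε, hε, M, hMball⟩ := exists_rel_ball_bound hm hS h hz
  have hzS : z ∈ S := by
    have := hMball z (subset_affineSpan ℝ S (intrinsicInterior_subset hz))
      (by simpa using hε)
    exact this.1
  have hzA : z ∈ affineSpan ℝ S := subset_affineSpan ℝ S hzS
  set c := F z with hc
  have hcM : c ≤ M := (hMball z hzA (by simpa using hε)).2
  by_contra hB
  push_neg at hB
  have claim : ∀ K : ℝ, 1 ≤ K → ∃ p ∈ S, ‖p - z‖ ≤ ε / 2 ∧ F p ≤ -K := by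
    intro K hK
    set r := ε / 2 with hr
    have hr0 : 0 < r := by positivity
    have hKc : (1 : ℝ) ≤ K + |c| := by linarith [abs_nonneg c]
    set D := r + 2 * (K + |c|) / (m * r) with hD
    have hDr : r < D := by
      have hpos : 0 < 2 * (K + |c|) / (m * r) := by positivity
      rw [hD]; linarith
    set k := max K ((K + |c|) * D / r) with hk
    obtain ⟨x, hxS, hx⟩ := hB (-k)
    have hkK : K ≤ k := le_max_left _ _
    have hkD : (K + |c|) * D / r ≤ k := le_max_right _ _
    have hk0 : (0 : ℝ) < k := by linarith
    clear_value D k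
    by_cases hd : ‖x - z‖ ≤ r
    · exact ⟨x, hxS, hd, by linarith⟩
    · push_neg at hd
      set d := ‖x - z‖ with hdd
      have hd0 : 0 < d := lt_trans hr0 hd
      set t := r / d with ht
      have ht0 : 0 < t := by positivity
      have ht1 : t < 1 := by
        rw [ht, div_lt_one hd0]; exact hd
      clear_value d t
      set p := (1 - t) • z + t • x with hp
      have hpS : p ∈ S := hS hzS hxS (by linarith) ht0.le (by ring)
      have htd : t * d = r := by
        rw [ht]; field_simp
      have hpz : ‖p - z‖ = r := by
        have hpzv : p - z = t • (x - z) := by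
          rw [hp]; module
        rw [hpzv, norm_smul, Real.norm_eq_abs, abs_of_pos ht0, ← hdd, htd]
      have hFp : F p ≤ (1 - t) * c + t * F x - m / 2 * ((1 - t) * t) * d ^ 2 := by
        have hineq := h hzS hxS (1 - t) t (by linarith) ht0.le (by ring)
        rw [← hp] at hineq
        calc F p ≤ (1 - t) * F z + t * F x - m / 2 * ((1 - t) * t) * ‖z - x‖ ^ 2 := hineq
        _ = (1 - t) * c + t * F x - m / 2 * ((1 - t) * t) * d ^ 2 := by
            rw [← hc, norm_sub_rev z x, ← hdd]
      have hquad : (1 - t) * t * d ^ 2 = r * (d - r) := by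
        rw [ht]; field_simp
      have hcbound : (1 - t) * c ≤ |c| := by
        have h1 : (1 - t) * c ≤ (1 - t) * |c| :=
          mul_le_mul_of_nonneg_left (le_abs_self c) (by linarith)
        nlinarith [abs_nonneg c]
      have hterm : 0 ≤ m / 2 * ((1 - t) * t) * d ^ 2 := by
        have h1 : (0:ℝ) ≤ (1 - t) * t := by nlinarith
        have h2 : (0:ℝ) ≤ m / 2 := by linarith
        positivity
      refine ⟨p, hpS, le_of_eq hpz, ?_⟩
      rcases le_or_gt d D with hcase | hcase
      · have htk : K + |c| ≤ t * k := by
          have h2 := mul_le_mul_of_nonneg_right hkD hr0.le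
          have h3 : (K + |c|) * D / r * r = (K + |c|) * D := by field_simp
          have h4 : (K + |c|) * d ≤ (K + |c|) * D := by nlinarith
          rw [ht, div_mul_eq_mul_div, le_div_iff₀ hd0]
          linarith
        have h5 : t * F x ≤ -(K + |c|) := by
          have h6 := mul_le_mul_of_nonneg_left hx.le ht0.le
          linarith
        linarith
      · have he : m / 2 * ((1 - t) * t) * d ^ 2 = m / 2 * (r * (d - r)) := by
          rw [mul_assoc, hquad]
        have hDval : m / 2 * (r * (D - r)) = K + |c| := by
          rw [hD]; field_simp; ring
        have hmr : (0:ℝ) < m / 2 * r := by positivity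
        have hmono := mul_le_mul_of_nonneg_left (by linarith : D - r ≤ d - r) hmr.le
        have hq2 : K + |c| ≤ m / 2 * ((1 - t) * t) * d ^ 2 := by
          rw [he]; nlinarith
        have h5 : t * F x ≤ 0 := by
          have h6 := mul_le_mul_of_nonneg_left hx.le ht0.le
          have h7 : 0 ≤ t * k := mul_nonneg ht0.le hk0.le
          linarith
        linarith
  have hM1 : (1 : ℝ) ≤ M + 2 * |c| + 2 := by
    have : -|c| ≤ c := neg_abs_le c
    linarith [abs_nonneg c]
  obtain ⟨p, hpS, hpr, hpK⟩ := claim (M + 2 * |c| + 2) hM1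
  set w := z + (z - p) with hw
  have hwA : w ∈ affineSpan ℝ S := by
    have hdir : z - p ∈ (affineSpan ℝ S).direction := by
      have := AffineSubspace.vsub_mem_direction hzA (subset_affineSpan ℝ S hpS)
      simpa [vsub_eq_sub] using this
    have := AffineSubspace.vadd_mem_of_mem_direction hdir hzA
    simpa [vadd_eq_add, hw, add_comm] using this
  have hwz : ‖w - z‖ < ε := by
    have hwz1 : w - z = z - p := by rw [hw]; abel
    rw [hwz1, norm_sub_rev]
    calc ‖p - z‖ ≤ ε / 2 := hpr
    _ < ε := by linarith
  obtain ⟨hwS, hwM⟩ := hMball w hwA hwz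
  have hmidpt : (1/2 : ℝ) • p + (1/2 : ℝ) • w = z := by
    rw [hw]; module
  have hmid := h hpS hwS (1/2) (1/2) (by norm_num) (by norm_num) (by norm_num)
  rw [hmidpt] at hmid
  have hterm : 0 ≤ m / 2 * (1/2 * (1/2)) * ‖p - w‖ ^ 2 := by positivity
  have hfinal : F z ≤ 1/2 * (-(M + 2 * |c| + 2)) + 1/2 * M := by linarith
  have hcc : -|c| ≤ c := neg_abs_le c
  rw [← hc] at hfinal
  linarith

def PhiR (F : Eu n → ℝ) (v x : Eu n) : ℝ := ⟪x, v⟫ - F x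

def sig (S : Set (Eu n)) (F : Eu n → ℝ) (v : Eu n) : ℝ := sSup (PhiR F v '' S)

lemma sig_bddAbove {m : ℝ} (hm : 0 < m) {S : Set (Eu n)} {F : Eu n → ℝ}
    (hS : Convex ℝ S) (hne : S.Nonempty) (h : SC m S F) (v : Eu n) :
    BddAbove (PhiR F v '' S) := by
  obtain ⟨B, hB⟩ := SC.bddBelow hm hS hne (h.tilt v)
  refine ⟨-B, ?_⟩
  rintro t ⟨x, hx, rfl⟩
  have := hB x hx
  simp only [PhiR]
  have h2 : ⟪x, v⟫ = ⟪x, v⟫ := rfl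
  have h3 : B ≤ F x - ⟪x, v⟫ := by
    have := hB x hx
    -- ⟪x,v⟫ vs ⟪v,x⟫ 
    simpa using this
  linarith

/-- `g` is a "good point" (proximal/maximizer surrogate) for `v`. -/
def Good (m : ℝ) (S : Set (Eu n)) (F : Eu n → ℝ) (v g : Eu n) : Prop :=
  (∀ x ∈ S, PhiR F v x ≤ sig S F v - m / 2 * ‖x - g‖ ^ 2) ∧
  (∀ δ : ℝ, 0 < δ → ∃ x ∈ S, ‖x - g‖ ≤ δ ∧ sig S F v - δ ≤ PhiR F v x)

lemma exists_good {m : ℝ} (hm : 0 < m) {S : Set (Eu n)} {F : Eu n → ℝ}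
    (hS : Convex ℝ S) (hne : S.Nonempty) (h : SC m S F) (v : Eu n) :
    ∃ g : Eu n, Good m S F v g := by
  have hbdd := sig_bddAbove hm hS hne h v
  have hnim : (PhiR F v '' S).Nonempty := hne.image _
  set σ := sig S F v with hσ
  have hle : ∀ x ∈ S, PhiR F v x ≤ σ := fun x hx => le_csSup hbdd ⟨x, hx, rfl⟩
  have hseq : ∀ k : ℕ, ∃ x, x ∈ S ∧ σ - 1/(k+1) < PhiR F v x := by
    intro k
    have hlt : σ - 1/((k:ℝ)+1) < σ := by
      have : (0:ℝ) < 1/((k:ℝ)+1) := by positivity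
      linarith
    obtain ⟨t, ⟨x, hxS, rfl⟩, hxt⟩ := exists_lt_of_lt_csSup hnim hlt
    exact ⟨x, hxS, hxt⟩
  choose xs hxsS hxsP using hseq
  have hconc : ∀ x ∈ S, ∀ y ∈ S, ∀ a b : ℝ, 0 ≤ a → 0 ≤ b → a + b = 1 →
      a * PhiR F v x + b * PhiR F v y + m/2*(a*b)*‖x-y‖^2 ≤ PhiR F v (a•x+b•y) := by
    intro x hx y hy a b ha hb hab
    have h1 := h hx hy a b ha hb hab
    have h2 : ⟪a•x+b•y, v⟫ = a*⟪x,v⟫ + b*⟪y,v⟫ := by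
      rw [inner_add_left, real_inner_smul_left, real_inner_smul_left]
    simp only [PhiR, h2]
    linarith
  have hdist2 : ∀ j k : ℕ, ‖xs j - xs k‖^2 ≤ 8/m * (1/((j:ℝ)+1) + 1/((k:ℝ)+1)) := by
    intro j k
    have hmid := hconc _ (hxsS j) _ (hxsS k) (1/2) (1/2)
      (by norm_num) (by norm_num) (by norm_num)
    have hmem : (1/2:ℝ)•xs j + (1/2:ℝ)•xs k ∈ S :=
      hS (hxsS j) (hxsS k) (by norm_num) (by norm_num) (by norm_num)
    have hub := hle _ hmem
    have hPj := hxsP j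
    have hPk := hxsP k
    rw [div_mul_eq_mul_div, le_div_iff₀ hm]
    nlinarith
  have hcauchy : CauchySeq xs := by
    rw [Metric.cauchySeq_iff]
    intro ε hε
    obtain ⟨N, hN⟩ := exists_nat_gt (16/(m*ε^2))
    refine ⟨N, fun j hj k hk => ?_⟩
    have hj1 : 1/((j:ℝ)+1) ≤ 1/((N:ℝ)+1) := by
      apply one_div_le_one_div_of_le (by positivity)
      exact_mod_cast by omega
    have hk1 : 1/((k:ℝ)+1) ≤ 1/((N:ℝ)+1) := by
      apply one_div_le_one_div_of_le (by positivity)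
      exact_mod_cast by omega
    have hsq : ‖xs j - xs k‖^2 < ε^2 := by
      have h1 := hdist2 j k
      have h2 : 8/m * (1/((j:ℝ)+1) + 1/((k:ℝ)+1)) ≤ 8/m * (2/((N:ℝ)+1)) := by
        have hsum : 1/((j:ℝ)+1) + 1/((k:ℝ)+1) ≤ 2/((N:ℝ)+1) := by
          calc 1/((j:ℝ)+1) + 1/((k:ℝ)+1) ≤ 1/((N:ℝ)+1) + 1/((N:ℝ)+1) := add_le_add hj1 hk1
          _ = 2/((N:ℝ)+1) := by ring
        apply mul_le_mul_of_nonneg_left hsum (by positivity)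
      have hN1 : 16/(m*ε^2) < (N:ℝ)+1 := by
        have : (N:ℝ) < (N:ℝ)+1 := by linarith
        linarith
      have hNpos : (0:ℝ) < (N:ℝ)+1 := by positivity
      have h3 : 8/m * (2/((N:ℝ)+1)) < ε^2 := by
        rw [div_lt_iff₀ (by positivity : (0:ℝ) < m*ε^2)] at hN1
        rw [div_mul_div_comm, div_lt_iff₀ (by positivity : (0:ℝ) < m*((N:ℝ)+1))]
        nlinarith
      linarith
    rw [dist_eq_norm]
    have := lt_of_pow_lt_pow_left₀ 2 hε.le hsq
    exact this
  obtain ⟨g, hg⟩ := cauchySeq_tendsto_of_complete hcauchy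
  have hnormlim : ∀ x : Eu n, Tendsto (fun k => ‖x - xs k‖^2) atTop (𝓝 (‖x - g‖^2)) := by
    intro x
    exact ((tendsto_const_nhds.sub hg).norm).pow 2
  refine ⟨g, ?_, ?_⟩
  · intro x hx
    have hkey : ∀ t : ℝ, 0 < t → t < 1 → PhiR F v x ≤ σ - m/2*(1-t)*‖x - g‖^2 := by
      intro t ht0 ht1
      have hstep : ∀ k : ℕ, t * PhiR F v x ≤
          t*σ + 1/((k:ℝ)+1) - m/2*(t*(1-t))*‖x - xs k‖^2 := by
        intro k
        have hcomb := hconc _ (hxsS k) x hx (1-t) t (by linarith) ht0.le (by ring)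
        have hmem : (1-t)•xs k + t•x ∈ S := hS (hxsS k) hx (by linarith) ht0.le (by ring)
        have hub := hle _ hmem
        have hP := hxsP k
        rw [norm_sub_rev] at hcomb
        have he : (0:ℝ) < 1/((k:ℝ)+1) := by positivity
        have hprod := mul_le_mul_of_nonneg_left hP.le (by linarith : (0:ℝ) ≤ 1 - t)
        have hte : 0 ≤ t * (1/((k:ℝ)+1)) := mul_nonneg ht0.le he.le
        linarith
      have hlim : Tendsto (fun k : ℕ => t*σ + 1/((k:ℝ)+1) - m/2*(t*(1-t))*‖x - xs k‖^2)
          atTop (𝓝 (t*σ + 0 - m/2*(t*(1-t))*‖x - g‖^2)) := by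
        exact (tendsto_const_nhds.add tendsto_one_div_add_atTop_nhds_zero_nat).sub
          ((hnormlim x).const_mul _)
      have hlimle : t * PhiR F v x ≤ t*σ + 0 - m/2*(t*(1-t))*‖x - g‖^2 :=
        ge_of_tendsto hlim (Filter.Eventually.of_forall hstep)
      have hfactor : t*σ + 0 - m/2*(t*(1-t))*‖x - g‖^2
          = t * (σ - m/2*(1-t)*‖x - g‖^2) := by ring
      rw [hfactor] at hlimle
      exact le_of_mul_le_mul_left hlimle ht0
    have hfin : ∀ j : ℕ, PhiR F v x ≤ σ - m/2*(1 - 1/((j:ℝ)+2))*‖x-g‖^2 := by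
      intro j
      apply hkey
      · positivity
      · rw [div_lt_one (by positivity)]
        have : (0:ℝ) ≤ (j:ℝ) := Nat.cast_nonneg j
        linarith
    have hlim2 : Tendsto (fun j : ℕ => σ - m/2*(1 - 1/((j:ℝ)+2))*‖x-g‖^2)
        atTop (𝓝 (σ - m/2*(1 - 0)*‖x-g‖^2)) := by
      apply tendsto_const_nhds.sub
      apply Tendsto.mul_const
      apply Tendsto.const_mul
      apply tendsto_const_nhds.sub
      have hcomp : Tendsto (fun j : ℕ => (1:ℝ)/((j:ℝ)+2)) atTop (𝓝 0) := by
        have h1 : Tendsto (fun j : ℕ => ((j:ℝ)+2)) atTop atTop :=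
          tendsto_atTop_add_const_right _ 2 tendsto_natCast_atTop_atTop
        exact (h1.inv_tendsto_atTop).congr (fun j => by simp [one_div])
      exact hcomp
    have := ge_of_tendsto hlim2 (Filter.Eventually.of_forall hfin)
    calc PhiR F v x ≤ σ - m/2*(1 - 0)*‖x-g‖^2 := this
    _ = σ - m/2*‖x-g‖^2 := by ring
  · intro δ hδ
    obtain ⟨N₁, hN₁⟩ := (Metric.tendsto_atTop.1 hg) δ hδ
    set k := max N₁ ⌈1/δ⌉₊ with hkdef
    have hk1 : dist (xs k) g < δ := hN₁ k (le_max_left _ _)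
    have hk2 : 1/((k:ℝ)+1) ≤ δ := by
      rw [div_le_iff₀ (by positivity)]
      have hge : (⌈1/δ⌉₊ : ℝ) ≤ (k:ℝ) := by exact_mod_cast le_max_right N₁ ⌈1/δ⌉₊
      have := Nat.le_ceil (1/δ)
      have h1δ : 1/δ ≤ (k:ℝ) := le_trans this hge
      rw [div_le_iff₀ hδ] at h1δ
      nlinarith
    refine ⟨xs k, hxsS k, ?_, ?_⟩
    · rw [← dist_eq_norm]
      exact hk1.le
    · have := hxsP k
      linarith

lemma sig_lower {m : ℝ} (hm : 0 < m) {S : Set (Eu n)} {F : Eu n → ℝ}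
    (hS : Convex ℝ S) (hne : S.Nonempty) (h : SC m S F) {v g : Eu n}
    (hg : Good m S F v g) (u : Eu n) :
    sig S F v + ⟪g, u - v⟫ ≤ sig S F u := by
  have hbddu := sig_bddAbove hm hS hne h u
  refine le_of_forall_pos_le_add ?_
  intro ε hε
  have hC0 : (0:ℝ) < 1 + ‖u - v‖ := by positivity
  set δ := min 1 (ε / (1 + ‖u - v‖)) with hδdef
  have hδ0 : 0 < δ := lt_min one_pos (by positivity)
  have hδε : δ * (1 + ‖u - v‖) ≤ ε := by
    have h1 : δ ≤ ε / (1 + ‖u - v‖) := min_le_right _ _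
    rw [le_div_iff₀ hC0] at h1
    linarith
  obtain ⟨x, hxS, hxg, hxP⟩ := hg.2 δ hδ0
  have h1 : PhiR F u x ≤ sig S F u := le_csSup hbddu ⟨x, hxS, rfl⟩
  have h2 : PhiR F u x = PhiR F v x + ⟪x, u - v⟫ := by
    simp only [PhiR, inner_sub_right]; ring
  have h3 : ⟪x, u - v⟫ = ⟪g, u - v⟫ + ⟪x - g, u - v⟫ := by
    rw [← inner_add_left]
    congr 1
    abel
  have h4 : -(δ * ‖u - v‖) ≤ ⟪x - g, u - v⟫ := by
    have habs := abs_real_inner_le_norm (x - g) (u - v)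
    have hb : ‖x - g‖ * ‖u - v‖ ≤ δ * ‖u - v‖ :=
      mul_le_mul_of_nonneg_right hxg (norm_nonneg _)
    have := neg_abs_le ⟪x - g, u - v⟫
    linarith
  linarith

lemma sig_upper_aux {m : ℝ} (hm : 0 < m) (a b : ℝ) (ha : 0 ≤ a) (hb : 0 ≤ b) :
    a * b - m / 2 * a ^ 2 ≤ 1 / (2 * m) * b ^ 2 := by
  rw [← sub_nonneg]
  have heq : 1 / (2 * m) * b ^ 2 - (a * b - m / 2 * a ^ 2) = (b - m * a) ^ 2 / (2 * m) := by
    field_simp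
    ring
  rw [heq]
  positivity

lemma sig_upper {m : ℝ} (hm : 0 < m) {S : Set (Eu n)} {F : Eu n → ℝ}
    (hS : Convex ℝ S) (hne : S.Nonempty) (h : SC m S F) {v g : Eu n}
    (hg : Good m S F v g) (u : Eu n) :
    sig S F u ≤ sig S F v + ⟪g, u - v⟫ + 1 / (2 * m) * ‖u - v‖ ^ 2 := by
  apply csSup_le (hne.image _)
  rintro b ⟨x, hxS, rfl⟩
  have hkey := hg.1 x hxS
  have h2 : PhiR F u x = PhiR F v x + ⟪x, u - v⟫ := by
    simp only [PhiR, inner_sub_right]; ring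
  have h3 : ⟪x, u - v⟫ = ⟪g, u - v⟫ + ⟪x - g, u - v⟫ := by
    rw [← inner_add_left]; congr 1; abel
  have h4 : ⟪x - g, u - v⟫ ≤ ‖x - g‖ * ‖u - v‖ := real_inner_le_norm _ _
  have h5 := sig_upper_aux hm ‖x - g‖ ‖u - v‖ (norm_nonneg _) (norm_nonneg _)
  show PhiR F u x ≤ _
  linarith

lemma good_mono {m : ℝ} (hm : 0 < m) {S : Set (Eu n)} {F : Eu n → ℝ}
    (hS : Convex ℝ S) (hne : S.Nonempty) (h : SC m S F) {v₁ g₁ v₂ g₂ : Eu n}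
    (hg1 : Good m S F v₁ g₁) (hg2 : Good m S F v₂ g₂) :
    m * ‖g₁ - g₂‖ ^ 2 ≤ ⟪g₁ - g₂, v₁ - v₂⟫ := by
  have key : ∀ (v g v' g' : Eu n), Good m S F v g → Good m S F v' g' →
      sig S F v' + ⟪g', v - v'⟫ + m / 2 * ‖g' - g‖ ^ 2 ≤ sig S F v := by
    intro v g v' g' hgood hgood'
    refine le_of_forall_pos_le_add ?_
    intro ε hε
    have hC0 : (0:ℝ) < 1 + ‖v - v'‖ + m / 2 * (2 * ‖g' - g‖ + 1) := by positivity
    set δ := min 1 (ε / (1 + ‖v - v'‖ + m / 2 * (2 * ‖g' - g‖ + 1))) with hδdef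
    have hδ0 : 0 < δ := lt_min one_pos (by positivity)
    have hδ1 : δ ≤ 1 := min_le_left _ _
    have hδε : δ * (1 + ‖v - v'‖ + m / 2 * (2 * ‖g' - g‖ + 1)) ≤ ε := by
      have h1 : δ ≤ ε / (1 + ‖v - v'‖ + m / 2 * (2 * ‖g' - g‖ + 1)) := min_le_right _ _
      rw [le_div_iff₀ hC0] at h1
      linarith
    obtain ⟨x, hxS, hxg', hxP⟩ := hgood'.2 δ hδ0
    have hkey := hgood.1 x hxS
    have h2 : PhiR F v x = PhiR F v' x + ⟪x, v - v'⟫ := by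
      simp only [PhiR, inner_sub_right]; ring
    have h3 : ⟪x, v - v'⟫ = ⟪g', v - v'⟫ + ⟪x - g', v - v'⟫ := by
      rw [← inner_add_left]; congr 1; abel
    have h4 : -(δ * ‖v - v'‖) ≤ ⟪x - g', v - v'⟫ := by
      have habs := abs_real_inner_le_norm (x - g') (v - v')
      have hb : ‖x - g'‖ * ‖v - v'‖ ≤ δ * ‖v - v'‖ :=
        mul_le_mul_of_nonneg_right hxg' (norm_nonneg _)
      have := neg_abs_le ⟪x - g', v - v'⟫
      linarith
    have hnorm : ‖g' - g‖ - δ ≤ ‖x - g‖ := by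
      have htri : ‖g' - g‖ ≤ ‖g' - x‖ + ‖x - g‖ := norm_sub_le_norm_sub_add_norm_sub _ _ _
      have : ‖g' - x‖ = ‖x - g'‖ := norm_sub_rev _ _
      linarith
    have hsq : ‖g' - g‖ ^ 2 - δ * (2 * ‖g' - g‖ + 1) ≤ ‖x - g‖ ^ 2 := by
      rcases le_or_gt ‖g' - g‖ δ with hcc | hcc
      · nlinarith [norm_nonneg (x - g), norm_nonneg (g' - g), sq_nonneg (‖x - g‖)]
      · nlinarith [sq_nonneg (‖x - g‖ - (‖g' - g‖ - δ)), norm_nonneg (x - g)]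
    have hmm : m / 2 * (‖g' - g‖ ^ 2 - δ * (2 * ‖g' - g‖ + 1)) ≤ m / 2 * ‖x - g‖ ^ 2 :=
      mul_le_mul_of_nonneg_left hsq (by linarith)
    nlinarith
  have h12 := key v₁ g₁ v₂ g₂ hg1 hg2
  have h21 := key v₂ g₂ v₁ g₁ hg2 hg1
  have hin : ⟪g₁ - g₂, v₁ - v₂⟫ + ⟪g₂, v₁ - v₂⟫ + ⟪g₁, v₂ - v₁⟫ = 0 := by
    rw [inner_sub_left, show v₂ - v₁ = -(v₁ - v₂) from by abel, inner_neg_right]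
    ring
  have hns : m / 2 * ‖g₂ - g₁‖ ^ 2 = m / 2 * ‖g₁ - g₂‖ ^ 2 := by rw [norm_sub_rev]
  linarith

lemma good_lip {m : ℝ} (hm : 0 < m) {S : Set (Eu n)} {F : Eu n → ℝ}
    (hS : Convex ℝ S) (hne : S.Nonempty) (h : SC m S F) {v₁ g₁ v₂ g₂ : Eu n}
    (hg1 : Good m S F v₁ g₁) (hg2 : Good m S F v₂ g₂) :
    ‖g₁ - g₂‖ ≤ 1 / m * ‖v₁ - v₂‖ := by
  have hmono := good_mono hm hS hne h hg1 hg2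
  have hcs : ⟪g₁ - g₂, v₁ - v₂⟫ ≤ ‖g₁ - g₂‖ * ‖v₁ - v₂‖ := real_inner_le_norm _ _
  rcases eq_or_lt_of_le (norm_nonneg (g₁ - g₂)) with h0 | h0
  · rw [← h0]; positivity
  · have key : m * ‖g₁ - g₂‖ ≤ ‖v₁ - v₂‖ := by nlinarith
    rw [one_div, inv_mul_eq_div, le_div_iff₀ hm]
    linarith

end Stmt0Aux


open Stmt0Aux in
/-- If `f : ℝⁿ → ℝ ∪ {∞}` is proper and `m`-strongly convex (`m > 0`), then its
convex conjugate `f*(v) = sup_x (⟨x, v⟩ − f(x))` is finite at every `v ∈ ℝⁿ`, `f*` is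
differentiable on all of `ℝⁿ`, and its gradient is Lipschitz continuous with constant `1/m`. -/
theorem stmt0 {n : ℕ} (m : ℝ) (hm : 0 < m) (f : Eu n → EReal)
    (hproper : ProperFn f) (hsc : StrongConvexFn m f) :
    (∀ v : Eu n, econj f v ≠ ⊥ ∧ econj f v ≠ ⊤) ∧
    ∃ G : Eu n → Eu n,
      (∀ v : Eu n, HasGradientAt (fun u => (econj f u).toReal) (G v) v) ∧
      ∀ v₁ v₂ : Eu n, ‖G v₁ - G v₂‖ ≤ (1 / m) * ‖v₁ - v₂‖ := by
  obtain ⟨hbot, x₀, hx₀⟩ := hproper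
  set S := edom f with hSdef
  have hne : S.Nonempty := ⟨x₀, hx₀⟩
  have hSconv : Convex ℝ S := hsc.1
  set F : Eu n → ℝ := fun x => (f x).toReal with hF
  have hcoe : ∀ x ∈ S, f x = ((F x : ℝ) : EReal) := by
    intro x hx
    rw [hF]
    exact (EReal.coe_toReal (ne_of_lt hx) (ne_of_gt (hbot x))).symm
  have HSC : SC m S F := by
    intro x hx y hy a b ha hb hab
    have hb1 : b = 1 - a := by linarith
    subst hb1
    have hineq := hsc.2 x y a (1 - a) ha hb hab
    beta_reduce at hineq
    have hcx := hcoe x hx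
    have hcy := hcoe y hy
    rw [hcx, hcy] at hineq
    rw [show ((F x : ℝ) : EReal) - ((m / 2 * ‖x‖ ^ 2 : ℝ) : EReal)
        = ((F x - m / 2 * ‖x‖ ^ 2 : ℝ) : EReal) from (EReal.coe_sub _ _).symm,
      show ((F y : ℝ) : EReal) - ((m / 2 * ‖y‖ ^ 2 : ℝ) : EReal)
        = ((F y - m / 2 * ‖y‖ ^ 2 : ℝ) : EReal) from (EReal.coe_sub _ _).symm,
      show ((a : ℝ) : EReal) * ((F x - m / 2 * ‖x‖ ^ 2 : ℝ) : EReal)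
        = ((a * (F x - m / 2 * ‖x‖ ^ 2) : ℝ) : EReal) from (EReal.coe_mul _ _).symm,
      show (((1 - a : ℝ)) : EReal) * ((F y - m / 2 * ‖y‖ ^ 2 : ℝ) : EReal)
        = (((1 - a) * (F y - m / 2 * ‖y‖ ^ 2) : ℝ) : EReal) from (EReal.coe_mul _ _).symm,
      show ((a * (F x - m / 2 * ‖x‖ ^ 2) : ℝ) : EReal)
          + (((1 - a) * (F y - m / 2 * ‖y‖ ^ 2) : ℝ) : EReal)
        = ((a * (F x - m / 2 * ‖x‖ ^ 2) + (1 - a) * (F y - m / 2 * ‖y‖ ^ 2) : ℝ) : EReal)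
        from (EReal.coe_add _ _).symm] at hineq
    set z := a • x + (1 - a) • y with hz
    have hzS : z ∈ S := by
      by_contra hzS
      have hfz : f z = ⊤ := by
        by_contra hne'
        exact hzS (lt_top_iff_ne_top.2 hne')
      rw [hfz, EReal.top_sub_coe] at hineq
      exact EReal.coe_ne_top _ (top_le_iff.1 hineq)
    rw [hcoe z hzS,
      show ((F z : ℝ) : EReal) - ((m / 2 * ‖z‖ ^ 2 : ℝ) : EReal)
        = ((F z - m / 2 * ‖z‖ ^ 2 : ℝ) : EReal) from (EReal.coe_sub _ _).symm,
      EReal.coe_le_coe_iff] at hineq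
    have hnz : ‖z‖ ^ 2 = a ^ 2 * ‖x‖ ^ 2 + 2 * (a * (1 - a)) * ⟪x, y⟫
        + (1 - a) ^ 2 * ‖y‖ ^ 2 := by
      rw [hz, norm_add_sq_real, norm_smul, norm_smul, real_inner_smul_left,
        real_inner_smul_right, Real.norm_eq_abs, Real.norm_eq_abs,
        abs_of_nonneg ha, abs_of_nonneg hb]
      ring
    have hxy : ‖x - y‖ ^ 2 = ‖x‖ ^ 2 - 2 * ⟪x, y⟫ + ‖y‖ ^ 2 := norm_sub_sq_real x y
    rw [hnz] at hineq
    rw [hxy]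
    linarith
  have hbddA : ∀ v, BddAbove (PhiR F v '' S) := fun v => sig_bddAbove hm hSconv hne HSC v
  have hlink : ∀ v : Eu n, econj f v = ((sig S F v : ℝ) : EReal) := by
    intro v
    have hnim : (PhiR F v '' S).Nonempty := hne.image _
    apply le_antisymm
    · apply iSup_le
      intro x
      by_cases hx : x ∈ S
      · have hterm : ((⟪x, v⟫ : ℝ) : EReal) - f x = ((PhiR F v x : ℝ) : EReal) := by
          rw [hcoe x hx, ← EReal.coe_sub]
          rfl
        rw [hterm]
        exact EReal.coe_le_coe_iff.2 (le_csSup (hbddA v) ⟨x, hx, rfl⟩)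
      · have hfx : f x = ⊤ := by
          by_contra hne'
          exact hx (lt_top_iff_ne_top.2 hne')
        rw [hfx]
        have : ((⟪x, v⟫ : ℝ) : EReal) - ⊤ = ⊥ := by
          rw [sub_eq_add_neg]
          simp
        rw [this]
        exact bot_le
    · apply le_of_forall_lt
      intro c hc
      have hterm0 : ((⟪x₀, v⟫ : ℝ) : EReal) - f x₀ = ((PhiR F v x₀ : ℝ) : EReal) := by
        rw [hcoe x₀ hx₀, ← EReal.coe_sub]
        rfl
      have hle0 : ((PhiR F v x₀ : ℝ) : EReal) ≤ econj f v := by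
        rw [← hterm0]
        exact le_iSup (fun x => ((⟪x, v⟫ : ℝ) : EReal) - f x) x₀
      induction c using EReal.rec with
      | bot => exact lt_of_lt_of_le (EReal.bot_lt_coe _) hle0
      | coe r =>
        have hr : r < sig S F v := by exact_mod_cast hc
        obtain ⟨t, ⟨x, hxS, rfl⟩, hrt⟩ := exists_lt_of_lt_csSup hnim hr
        have hterm : ((⟪x, v⟫ : ℝ) : EReal) - f x = ((PhiR F v x : ℝ) : EReal) := by
          rw [hcoe x hxS, ← EReal.coe_sub]
          rfl
        have hle : ((PhiR F v x : ℝ) : EReal) ≤ econj f v := by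
          rw [← hterm]
          exact le_iSup (fun x => ((⟪x, v⟫ : ℝ) : EReal) - f x) x
        exact lt_of_lt_of_le (EReal.coe_lt_coe_iff.2 hrt) hle
      | top => exact absurd hc (not_lt.2 le_top)
  constructor
  · intro v
    rw [hlink v]
    exact ⟨EReal.coe_ne_bot _, EReal.coe_ne_top _⟩
  · have hgood : ∀ v : Eu n, ∃ g : Eu n, Good m S F v g :=
      fun v => exists_good hm hSconv hne HSC v
    choose G hG using hgood
    refine ⟨G, ?_, ?_⟩
    · intro v
      have hfun : (fun u => (econj f u).toReal) = fun u => sig S F u := by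
        funext u
        rw [hlink u, EReal.toReal_coe]
      rw [hfun, hasGradientAt_iff_isLittleO, Asymptotics.isLittleO_iff]
      intro c hc
      have hrad : (0 : ℝ) < 2 * m * c := by positivity
      filter_upwards [Metric.ball_mem_nhds v hrad] with u hu
      have hlow := sig_lower hm hSconv hne HSC (hG v) u
      have hupp := sig_upper hm hSconv hne HSC (hG v) u
      have h1 : 0 ≤ sig S F u - sig S F v - ⟪G v, u - v⟫ := by linarith
      have h2 : sig S F u - sig S F v - ⟪G v, u - v⟫ ≤ 1 / (2 * m) * ‖u - v‖ ^ 2 := by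
        linarith
      have hub : ‖u - v‖ < 2 * m * c := by
        rw [← dist_eq_norm]
        exact Metric.mem_ball.1 hu
      rw [Real.norm_eq_abs, abs_of_nonneg h1]
      have h3 : 1 / (2 * m) * ‖u - v‖ ^ 2 ≤ c * ‖u - v‖ := by
        have hn : 0 ≤ ‖u - v‖ := norm_nonneg _
        have hkey : 1 / (2 * m) * ‖u - v‖ ≤ c := by
          rw [div_mul_eq_mul_div, one_mul, div_le_iff₀ (by positivity : (0:ℝ) < 2 * m)]
          nlinarith
        calc 1 / (2 * m) * ‖u - v‖ ^ 2 = (1 / (2 * m) * ‖u - v‖) * ‖u - v‖ := by ring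
        _ ≤ c * ‖u - v‖ := mul_le_mul_of_nonneg_right hkey hn
      exact le_trans h2 h3
    · intro v₁ v₂
      exact good_lip hm hSconv hne HSC (hG v₁) (hG v₂)
end
end

section
/- Let f : ℝᵖ × ℝⁿ → ℝ ∪ {∞}, and for each u ∈ ℝᵖ let g(·; u) : ℝⁿ → ℝ ∪ {∞} be closed, proper, m-strongly convex, and subdifferentiable at every point of its domain. Then the bilevel problem inf over (u, w, λ) ∈ ℝᵖ × ℝⁿ × ℝⁿ of f(u, w) subject to w being the unique minimizer of w' ↦ g(w'; u) + ⟨λ, w'⟩, and the single-level problem inf over (u, w) of f(u, w) subject to w ∈ dom g(·; u), have equal optimal values. Moreover, if (u⋆, w⋆) is optimal for the single-level problem and −λ⋆ ∈ ∂_w g(w⋆; u⋆), then (u⋆, w⋆, λ⋆) is optimal for the bilevel problem. -/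
open scoped RealInnerProductSpace
open Filter Topology

noncomputable section

lemma lt_top_of_add_coe_lt_top {x : EReal} {c : ℝ} (h : x + (c : EReal) < ⊤) : x < ⊤ := by
  by_contra hx
  simp only [not_lt, top_le_iff] at hx
  rw [hx, EReal.top_add_coe] at h
  exact absurd h (lt_irrefl _)

lemma dom_of_uniqueMin {n : ℕ} {G : Eu n → EReal}
    (hex : ∃ x, G x < ⊤) {lam : Eu n} {w : Eu n}
    (hmin : IsUniqueMin (fun w' => G w' + ((⟪lam, w'⟫ : ℝ) : EReal)) w) : G w < ⊤ := by
  obtain ⟨z, hz⟩ := hex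
  by_cases hzw : z = w
  · rwa [hzw] at hz
  · have h1 := hmin z hzw
    have h2 : G z + ((⟪lam, z⟫ : ℝ) : EReal) < ⊤ :=
      EReal.add_lt_top hz.ne (EReal.coe_ne_top _)
    exact lt_top_of_add_coe_lt_top (h1.trans h2)

lemma key_uniq {n : ℕ} (m : ℝ) (hm : 0 < m) (G : Eu n → EReal)
    (hbot : ∀ x, ⊥ < G x)
    (hsc : ConvexFn (fun x => G x - ((m / 2 * ‖x‖ ^ 2 : ℝ) : EReal)))
    (w : Eu n) (hw : G w < ⊤) (lam : Eu n)
    (hlam : -lam ∈ subdiff G w) :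
    IsUniqueMin (fun w' => G w' + ((⟪lam, w'⟫ : ℝ) : EReal)) w := by
  intro z hz
  obtain ⟨a, ha⟩ : ∃ a : ℝ, G w = (a : EReal) :=
    ⟨_, (EReal.coe_toReal hw.ne (hbot w).ne').symm⟩
  by_cases hzt : G z = ⊤
  · simp only [hzt, EReal.top_add_coe, ha]
    rw [← EReal.coe_add]
    exact EReal.coe_lt_top _
  · obtain ⟨b, hb⟩ : ∃ b : ℝ, G z = (b : EReal) :=
      ⟨_, (EReal.coe_toReal hzt (hbot z).ne').symm⟩
    set mid := (2⁻¹ : ℝ) • z + (2⁻¹ : ℝ) • w with hmid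
    have hconv := hsc z w 2⁻¹ 2⁻¹ (by norm_num) (by norm_num) (by norm_num)
    simp only [← hmid] at hconv
    rw [ha, hb, ← EReal.coe_sub, ← EReal.coe_sub, ← EReal.coe_mul, ← EReal.coe_mul,
      ← EReal.coe_add] at hconv
    have hmt : G mid ≠ ⊤ := by
      intro htop
      rw [htop, EReal.top_sub_coe] at hconv
      exact absurd (top_le_iff.mp hconv) (EReal.coe_ne_top _)
    obtain ⟨c, hc⟩ : ∃ c : ℝ, G mid = (c : EReal) :=
      ⟨_, (EReal.coe_toReal hmt (hbot mid).ne').symm⟩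
    rw [hc, ← EReal.coe_sub, EReal.coe_le_coe_iff] at hconv
    have hsubm := hlam mid
    rw [ha, hc, ← EReal.coe_add, EReal.coe_le_coe_iff] at hsubm
    have hinner : ⟪-lam, mid - w⟫ = 2⁻¹ * ⟪lam, w⟫ - 2⁻¹ * ⟪lam, z⟫ := by
      simp [hmid, inner_sub_right, inner_add_right, inner_smul_right, real_inner_smul_right]
      ring
    rw [hinner] at hsubm
    have hmid2 : ‖mid‖ ^ 2 = (‖z‖ ^ 2 + 2 * ⟪z, w⟫ + ‖w‖ ^ 2) / 4 := by
      have h0 : mid = (2⁻¹ : ℝ) • (z + w) := by rw [hmid, smul_add]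
      rw [h0, norm_smul, mul_pow, norm_add_sq_real z w]
      simp
      ring
    have h2 : ‖z - w‖ ^ 2 = ‖z‖ ^ 2 - 2 * ⟪z, w⟫ + ‖w‖ ^ 2 := norm_sub_sq_real z w
    have hpos : 0 < ‖z - w‖ ^ 2 := by
      have h3 : z - w ≠ 0 := sub_ne_zero.mpr hz
      exact pow_pos (norm_pos_iff.mpr h3) 2
    show G w + ((⟪lam, w⟫ : ℝ) : EReal) < G z + ((⟪lam, z⟫ : ℝ) : EReal)
    rw [ha, hb, ← EReal.coe_add, ← EReal.coe_add, EReal.coe_lt_coe_iff]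
    nlinarith [mul_pos hm hpos]

/-- Equivalence of the bilevel incentive problem and the single-level problem,
and optimality of `(u⋆, w⋆, λ⋆)` built from a single-level optimum. -/
theorem stmt2 {p n : ℕ} (m : ℝ) (hm : 0 < m)
    (f : Eu p × Eu n → EReal) (g : Eu n → Eu p → EReal)
    (hclosed : ∀ u : Eu p, ClosedFn (fun w => g w u))
    (hproper : ∀ u : Eu p, ProperFn (fun w => g w u))
    (hsc : ∀ u : Eu p, StrongConvexFn m (fun w => g w u))
    (hsub : ∀ u : Eu p, ∀ w ∈ edom (fun w' => g w' u), (subdiff (fun w' => g w' u) w).Nonempty) :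
    -- the two problems have equal optimal values
    sInf {y : EReal | ∃ (u : Eu p) (w : Eu n) (lam : Eu n),
        IsUniqueMin (fun w' => g w' u + ((⟪lam, w'⟫ : ℝ) : EReal)) w ∧ y = f (u, w)} =
      sInf {y : EReal | ∃ (u : Eu p) (w : Eu n),
        w ∈ edom (fun w' => g w' u) ∧ y = f (u, w)} ∧
    -- a single-level optimum together with a subgradient-based incentive is bilevel optimal
    (∀ (ust : Eu p) (wst : Eu n), wst ∈ edom (fun w' => g w' ust) →
      (∀ (u : Eu p) (w : Eu n), w ∈ edom (fun w' => g w' u) → f (ust, wst) ≤ f (u, w)) →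
      ∀ lamst : Eu n, -lamst ∈ subdiff (fun w' => g w' ust) wst →
        IsUniqueMin (fun w' => g w' ust + ((⟪lamst, w'⟫ : ℝ) : EReal)) wst ∧
        ∀ (u : Eu p) (w : Eu n) (lam : Eu n),
          IsUniqueMin (fun w' => g w' u + ((⟪lam, w'⟫ : ℝ) : EReal)) w →
            f (ust, wst) ≤ f (u, w)) := by
  constructor
  · congr 1
    ext y
    constructor
    · rintro ⟨u, w, lam, hmin, rfl⟩
      exact ⟨u, w, dom_of_uniqueMin (hproper u).2 hmin, rfl⟩
    · rintro ⟨u, w, hw, rfl⟩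
      obtain ⟨v, hv⟩ := hsub u w hw
      refine ⟨u, w, -v, ?_, rfl⟩
      exact key_uniq m hm _ (hproper u).1 (hsc u).2 w hw (-v) (by simpa using hv)
  · intro ust wst hwst hopt lamst hlamst
    refine ⟨key_uniq m hm _ (hproper ust).1 (hsc ust).2 wst hwst lamst hlamst, ?_⟩
    intro u w lam hmin
    exact hopt u w (dom_of_uniqueMin (hproper u).2 hmin)
end
end

section
/- Let g : ℝⁿ → ℝ ∪ {∞} be closed, proper, m-strongly convex (m > 0) and subdifferentiable at every point of its domain, and let w⋆ ∈ dom g. Given any λ⁽⁰⁾ ∈ ℝⁿ, define iterates by w⁽ᵏ⁾ = argmin_w (g(w) + ⟨λ⁽ᵏ⁾, w⟩) and λ⁽ᵏ⁺¹⁾ = λ⁽ᵏ⁾ + m (w⁽ᵏ⁾ − w⋆). Then w⁽ᵏ⁾ → w⋆ as k → ∞, and there exists a constant C > 0 (depending on g, w⋆, and λ⁽⁰⁾) such that ‖w⁽ᵏ⁾ − w⋆‖ ≤ C / √(m k) for all k ≥ 1. -/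
open scoped RealInnerProductSpace
open Filter Topology

noncomputable section

lemma min_subdiff {n : ℕ} {g : Eu n → EReal} (hproper : ProperFn g) {lam : Eu n} {w : Eu n}
    (hmin : IsUniqueMin (fun w' => g w' + ((⟪lam, w'⟫ : ℝ) : EReal)) w) :
    (-lam) ∈ subdiff g w ∧ g w ≠ ⊤ := by
  obtain ⟨x, hx⟩ := hproper.2
  have hle : ∀ z, g w + ((⟪lam, w⟫ : ℝ) : EReal) ≤ g z + ((⟪lam, z⟫ : ℝ) : EReal) := by
    intro z
    rcases eq_or_ne z w with h | h
    · rw [h]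
    · exact (hmin z h).le
  have hwt : g w ≠ ⊤ := by
    intro htop
    have := hle x
    rw [htop, EReal.top_add_coe] at this
    rcases eq_or_ne (g x) ⊤ with h | h
    · exact hx.ne h
    · have h' : g x ≠ ⊥ := (hproper.1 x).ne'
      lift g x to ℝ using ⟨h, h'⟩ with gx
      rw [← EReal.coe_add] at this
      exact EReal.coe_ne_top _ (top_le_iff.mp this)
  refine ⟨?_, hwt⟩
  intro z
  rcases eq_or_ne (g z) ⊤ with h | h
  · rw [h]; exact le_top
  have key := hle z
  have hwb : g w ≠ ⊥ := (hproper.1 w).ne'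
  have hzb : g z ≠ ⊥ := (hproper.1 z).ne'
  lift g w to ℝ using ⟨hwt, hwb⟩ with gw
  lift g z to ℝ using ⟨h, hzb⟩ with gz
  rw [← EReal.coe_add, ← EReal.coe_add, EReal.coe_le_coe_iff] at key
  rw [← EReal.coe_add, EReal.coe_le_coe_iff]
  have hin : ⟪-lam, z - w⟫ = ⟪lam, w⟫ - ⟪lam, z⟫ := by
    rw [inner_neg_left, inner_sub_right]; ring
  linarith

lemma strong_subgrad {n : ℕ} {m : ℝ} {g : Eu n → EReal}
    (hproper : ProperFn g) (hsc : StrongConvexFn m g) {x z u : Eu n}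
    (hu : u ∈ subdiff g x) (hxt : g x ≠ ⊤) (hzt : g z ≠ ⊤) :
    (g x).toReal + ⟪u, z - x⟫ + m / 2 * ‖z - x‖ ^ 2 ≤ (g z).toReal := by
  have hxb : g x ≠ ⊥ := (hproper.1 x).ne'
  have hzb : g z ≠ ⊥ := (hproper.1 z).ne'
  set Gx := (g x).toReal with hGx
  set Gz := (g z).toReal with hGz
  have hgx : g x = (Gx : EReal) := (EReal.coe_toReal hxt hxb).symm
  have hgz : g z = (Gz : EReal) := (EReal.coe_toReal hzt hzb).symm
  have step : ∀ t : ℝ, 0 < t → t < 1 →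
      Gx + ⟪u, z - x⟫ + (1 - t) * (m / 2) * ‖z - x‖ ^ 2 ≤ Gz := by
    intro t ht ht1
    have ha : (0:ℝ) ≤ 1 - t := by linarith
    have hcvx := hsc.2 x z (1 - t) t ha ht.le (by ring)
    simp only [hgx, hgz] at hcvx
    set xt := (1 - t) • x + t • z with hxt_def
    set R : ℝ := (1 - t) * (Gx - m / 2 * ‖x‖ ^ 2) + t * (Gz - m / 2 * ‖z‖ ^ 2) with hR
    have hRHS : ((1 - t : ℝ) : EReal) * ((Gx : EReal) - ((m / 2 * ‖x‖ ^ 2 : ℝ) : EReal))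
        + ((t : ℝ) : EReal) * ((Gz : EReal) - ((m / 2 * ‖z‖ ^ 2 : ℝ) : EReal))
        = ((R : ℝ) : EReal) := by rw [hR]; norm_cast
    rw [hRHS] at hcvx
    have hxtle : g xt ≤ ((R + m / 2 * ‖xt‖ ^ 2 : ℝ) : EReal) := by
      rw [EReal.coe_add]
      exact (EReal.sub_le_iff_le_add (Or.inl (EReal.coe_ne_bot _))
        (Or.inl (EReal.coe_ne_top _))).mp hcvx
    have hsg := (hu xt).trans hxtle
    rw [hgx] at hsg
    rw [← EReal.coe_add, EReal.coe_le_coe_iff] at hsg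
    -- hsg : Gx + ⟪u, xt - x⟫ ≤ R + m/2 * ‖xt‖^2  (real)
    have hinner : ⟪u, xt - x⟫ = t * ⟪u, z - x⟫ := by
      have : xt - x = t • (z - x) := by
        rw [hxt_def]; module
      rw [this, real_inner_smul_right]
    have hnorm : ‖xt‖ ^ 2 = (1 - t) * ‖x‖ ^ 2 + t * ‖z‖ ^ 2 - t * (1 - t) * ‖z - x‖ ^ 2 := by
      rw [hxt_def]
      rw [@norm_add_sq_real]
      rw [@norm_sub_sq_real]
      rw [norm_smul, norm_smul, real_inner_smul_left, real_inner_smul_right]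
      rw [Real.norm_eq_abs, Real.norm_eq_abs, abs_of_nonneg ha, abs_of_nonneg ht.le,
        real_inner_comm z x]
      ring
    rw [hinner, hnorm, hR] at hsg
    have hq : t * (Gx + ⟪u, z - x⟫ + (1 - t) * (m / 2) * ‖z - x‖ ^ 2) ≤ t * Gz := by
      nlinarith [hsg]
    exact le_of_mul_le_mul_left hq ht
  -- limit t → 0
  have key : ∀ ε : ℝ, 0 < ε → Gx + ⟪u, z - x⟫ + m / 2 * ‖z - x‖ ^ 2 ≤ Gz + ε := by
    intro ε hε
    set B : ℝ := m / 2 * ‖z - x‖ ^ 2 with hB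
    set t : ℝ := min (ε / (|B| + 1)) (1/2) with htdef
    have hBpos : (0:ℝ) < |B| + 1 := by positivity
    have ht0 : 0 < t := lt_min (by positivity) (by norm_num)
    have ht1 : t < 1 := lt_of_le_of_lt (min_le_right _ _) (by norm_num)
    have := step t ht0 ht1
    have htB : t * |B| ≤ ε := by
      have h1 : t ≤ ε / (|B| + 1) := min_le_left _ _
      have h2 : t * |B| ≤ (ε / (|B| + 1)) * |B| :=
        mul_le_mul_of_nonneg_right h1 (abs_nonneg _)
      have h3 : (ε / (|B| + 1)) * |B| ≤ ε := by
        rw [div_mul_eq_mul_div, div_le_iff₀ hBpos]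
        nlinarith [abs_nonneg B]
      linarith
    have hbb : t * B ≤ t * |B| := mul_le_mul_of_nonneg_left (le_abs_self B) ht0.le
    nlinarith [this]
  linarith [le_of_forall_pos_le_add key]

lemma strong_mono {n : ℕ} {m : ℝ} {g : Eu n → EReal}
    (hproper : ProperFn g) (hsc : StrongConvexFn m g) {x y u v : Eu n}
    (hu : u ∈ subdiff g x) (hv : v ∈ subdiff g y) (hxt : g x ≠ ⊤) (hyt : g y ≠ ⊤) :
    m * ‖x - y‖ ^ 2 ≤ ⟪u - v, x - y⟫ := by
  have h1 := strong_subgrad hproper hsc hu hxt hyt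
  have h2 := strong_subgrad hproper hsc hv hyt hxt
  rw [norm_sub_rev y x] at h1
  simp only [inner_sub_left, inner_sub_right] at h1 h2 ⊢
  linarith

/-- Iterative method for linear incentives: with
`w⁽ᵏ⁾ = argmin_w (g(w) + ⟨λ⁽ᵏ⁾, w⟩)` and `λ⁽ᵏ⁺¹⁾ = λ⁽ᵏ⁾ + m (w⁽ᵏ⁾ − w⋆)`, the iterates `w⁽ᵏ⁾`
converge to `w⋆` with rate `‖w⁽ᵏ⁾ − w⋆‖ ≤ C / √(m k)`. -/
theorem stmt3 {n : ℕ} (m : ℝ) (hm : 0 < m) (g : Eu n → EReal)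
    (hclosed : ClosedFn g) (hproper : ProperFn g) (hsc : StrongConvexFn m g)
    (hsub : ∀ x ∈ edom g, (subdiff g x).Nonempty)
    (wst : Eu n) (hwst : wst ∈ edom g)
    (lam : ℕ → Eu n) (w : ℕ → Eu n)
    (hw : ∀ k : ℕ, IsUniqueMin (fun w' => g w' + ((⟪lam k, w'⟫ : ℝ) : EReal)) (w k))
    (hlam : ∀ k : ℕ, lam (k + 1) = lam k + m • (w k - wst)) :
    Tendsto w atTop (𝓝 wst) ∧
    ∃ C : ℝ, 0 < C ∧ ∀ k : ℕ, 1 ≤ k → ‖w k - wst‖ ≤ C / Real.sqrt (m * k) := by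
  obtain ⟨v, hv⟩ := hsub wst hwst
  have hwstt : g wst ≠ ⊤ := hwst.ne
  have hks : ∀ k, (-(lam k)) ∈ subdiff g (w k) ∧ g (w k) ≠ ⊤ :=
    fun k => min_subdiff hproper (hw k)
  set e : ℕ → Eu n := fun k => w k - wst with he
  -- inner product bound with v at wst
  have hmono1 : ∀ k, ⟪lam k + v, e k⟫ ≤ -(m * ‖e k‖ ^ 2) := by
    intro k
    have := strong_mono hproper hsc (hks k).1 hv (hks k).2 hwstt
    have hrw : -(lam k) - v = -(lam k + v) := by module
    rw [hrw, inner_neg_left] at this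
    linarith
  -- Lyapunov decrease
  have hdec : ∀ k, ‖lam (k+1) + v‖ ^ 2 ≤ ‖lam k + v‖ ^ 2 - m ^ 2 * ‖e k‖ ^ 2 := by
    intro k
    have hsplit : lam (k+1) + v = (lam k + v) + m • e k := by
      rw [hlam k]; module
    rw [hsplit, norm_add_sq_real, real_inner_smul_right, norm_smul]
    rw [Real.norm_eq_abs, abs_of_pos hm, mul_pow]
    nlinarith [hmono1 k, norm_nonneg (e k), sq_nonneg (‖e k‖)]
  -- error norm is antitone
  have hanti : Antitone (fun k => ‖e k‖) := by
    apply antitone_nat_of_succ_le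
    intro k
    have hmono2 := strong_mono hproper hsc (hks (k+1)).1 (hks k).1 (hks (k+1)).2 (hks k).2
    set d : Eu n := w (k+1) - w k with hd
    have hrw : -(lam (k+1)) - -(lam k) = -(m • e k) := by rw [hlam k]; module
    rw [hrw, inner_neg_left, real_inner_smul_left] at hmono2
    -- m ‖d‖² ≤ -(m ⟪e k, d⟫)  where note ⟪e k, w(k+1)-w k⟫
    have hip : ⟪e k, d⟫ ≤ -‖d‖ ^ 2 := by
      have := hmono2
      nlinarith [this]
    have hsq : ‖e (k+1)‖ ^ 2 ≤ ‖e k‖ ^ 2 := by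
      have hsplit : e (k+1) = e k + d := by simp only [he, hd]; module
      rw [hsplit, norm_add_sq_real]
      nlinarith [sq_nonneg ‖d‖]
    calc ‖e (k+1)‖ = Real.sqrt (‖e (k+1)‖ ^ 2) := (Real.sqrt_sq (norm_nonneg _)).symm
      _ ≤ Real.sqrt (‖e k‖ ^ 2) := Real.sqrt_le_sqrt hsq
      _ = ‖e k‖ := Real.sqrt_sq (norm_nonneg _)
  -- telescoping sum bound
  set D : ℝ := ‖lam 0 + v‖ with hD
  have hsum : ∀ k : ℕ, (k : ℝ) * (m ^ 2 * ‖e k‖ ^ 2) ≤ D ^ 2 := by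
    intro k
    have htel : ∀ j, ∑ i ∈ Finset.range j, m ^ 2 * ‖e i‖ ^ 2 ≤ D ^ 2 - ‖lam j + v‖ ^ 2 := by
      intro j
      induction j with
      | zero => simp [hD]
      | succ j ih =>
        rw [Finset.sum_range_succ]
        have := hdec j
        linarith
    have hlow : (k : ℝ) * (m ^ 2 * ‖e k‖ ^ 2) ≤ ∑ i ∈ Finset.range k, m ^ 2 * ‖e i‖ ^ 2 := by
      have : ∀ i ∈ Finset.range k, m ^ 2 * ‖e k‖ ^ 2 ≤ m ^ 2 * ‖e i‖ ^ 2 := by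
        intro i hi
        have hle : ‖e k‖ ≤ ‖e i‖ := hanti (Finset.mem_range.mp hi).le
        have : ‖e k‖ ^ 2 ≤ ‖e i‖ ^ 2 := by nlinarith [norm_nonneg (e k)]
        exact mul_le_mul_of_nonneg_left this (sq_nonneg m)
      calc (k : ℝ) * (m ^ 2 * ‖e k‖ ^ 2)
          = ∑ _i ∈ Finset.range k, m ^ 2 * ‖e k‖ ^ 2 := by
            rw [Finset.sum_const, Finset.card_range, nsmul_eq_mul]
        _ ≤ _ := Finset.sum_le_sum this
    have := htel k
    nlinarith [sq_nonneg ‖lam k + v‖]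
  -- the constant
  set C : ℝ := (D + 1) / Real.sqrt m with hC
  have hD0 : 0 ≤ D := norm_nonneg _
  have hsm : 0 < Real.sqrt m := Real.sqrt_pos.mpr hm
  have hCpos : 0 < C := by positivity
  have hbound : ∀ k : ℕ, 1 ≤ k → ‖w k - wst‖ ≤ C / Real.sqrt (m * k) := by
    intro k hk
    have hk0 : (0:ℝ) < (k:ℝ) := by exact_mod_cast hk
    have hmk : (0:ℝ) < m * k := by positivity
    have hsqmk : 0 < Real.sqrt (m * k) := Real.sqrt_pos.mpr hmk
    have hsq : ‖e k‖ ^ 2 ≤ (C / Real.sqrt (m * k)) ^ 2 := by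
      have h1 : ‖e k‖ ^ 2 ≤ D ^ 2 / (m ^ 2 * k) := by
        rw [le_div_iff₀ (by positivity)]
        have := hsum k
        nlinarith
      have h2 : (C / Real.sqrt (m * k)) ^ 2 = (D + 1) ^ 2 / (m ^ 2 * k) := by
        rw [div_pow, div_pow, Real.sq_sqrt hmk.le, Real.sq_sqrt hm.le]
        rw [div_div]
        ring_nf
      rw [h2, le_div_iff₀ (by positivity)]
      have hs := hsum k
      nlinarith [norm_nonneg (e k)]
    calc ‖w k - wst‖ = Real.sqrt (‖e k‖ ^ 2) := (Real.sqrt_sq (norm_nonneg _)).symm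
      _ ≤ Real.sqrt ((C / Real.sqrt (m * k)) ^ 2) := Real.sqrt_le_sqrt hsq
      _ = C / Real.sqrt (m * k) := Real.sqrt_sq (by positivity)
  refine ⟨?_, C, hCpos, hbound⟩
  -- convergence
  rw [tendsto_iff_norm_sub_tendsto_zero]
  apply squeeze_zero' (Eventually.of_forall fun k => norm_nonneg _)
    (eventually_atTop.mpr ⟨1, fun k hk => hbound k hk⟩)
  have h1 : Tendsto (fun k : ℕ => Real.sqrt (m * k)) atTop atTop := by
    apply tendsto_atTop_atTop.mpr
    intro b
    obtain ⟨N, hN⟩ := exists_nat_ge ((max b 0) ^ 2 / m)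
    refine ⟨N, fun k hk => ?_⟩
    have hkN : (N : ℝ) ≤ (k : ℝ) := Nat.cast_le.mpr hk
    have hb2 : (max b 0) ^ 2 ≤ m * k := by
      rw [div_le_iff₀ hm] at hN
      nlinarith
    calc b ≤ max b 0 := le_max_left _ _
      _ = Real.sqrt ((max b 0) ^ 2) := (Real.sqrt_sq (le_max_right _ _)).symm
      _ ≤ Real.sqrt (m * k) := Real.sqrt_le_sqrt hb2
  have h2 := h1.inv_tendsto_atTop
  have h3 : Tendsto (fun k : ℕ => C / Real.sqrt (m * k)) atTop (𝓝 0) := by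
    simp only [div_eq_mul_inv]
    simpa using h2.const_mul C
  exact h3
end
end

section
/- Let g : ℝⁿ → ℝ ∪ {∞} be closed, proper, and m-strongly convex (m > 0), K ⊂ ℝʳ a closed convex cone, and φ : ℝⁿ → ℝʳ continuously differentiable and K-convex. Then the map λ ↦ w*(λ), sending λ ∈ K* to the unique minimizer of w ↦ g(w) + ⟨λ, φ(w)⟩, is continuous on K*. -/
open scoped RealInnerProductSpace
open Filter Topology

noncomputable section

/-! ### Auxiliary lemmas -/

lemma deriv_ge_of_slope_aux (f : ℝ → ℝ) {f' c : ℝ} (hf : HasDerivAt f f' 0)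
    (h : ∀ t : ℝ, t ∈ Set.Ioc (0:ℝ) 1 → c ≤ (f t - f 0) / t) : c ≤ f' := by
  have ht : Tendsto (slope f 0) (𝓝[>] (0:ℝ)) (𝓝 f') :=
    (hasDerivAt_iff_tendsto_slope.1 hf).mono_left
      (nhdsWithin_mono _ (fun x hx => ne_of_gt hx))
  refine ge_of_tendsto ht ?_
  filter_upwards [Ioc_mem_nhdsGT_of_mem (by norm_num : (0:ℝ) ∈ Set.Ico (0:ℝ) 1)] with t htt
  have := h t htt
  rwa [slope_def_field, sub_zero]

lemma deriv_le_of_slope_aux (f : ℝ → ℝ) {f' c : ℝ} (hf : HasDerivAt f f' 0)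
    (h : ∀ t : ℝ, t ∈ Set.Ioc (0:ℝ) 1 → (f t - f 0) / t ≤ c) : f' ≤ c := by
  have ht : Tendsto (slope f 0) (𝓝[>] (0:ℝ)) (𝓝 f') :=
    (hasDerivAt_iff_tendsto_slope.1 hf).mono_left
      (nhdsWithin_mono _ (fun x hx => ne_of_gt hx))
  refine le_of_tendsto ht ?_
  filter_upwards [Ioc_mem_nhdsGT_of_mem (by norm_num : (0:ℝ) ∈ Set.Ico (0:ℝ) 1)] with t htt
  have := h t htt
  rwa [slope_def_field, sub_zero]

lemma line_hasDerivAt_aux {n : ℕ} (p : Eu n → ℝ) {D : Eu n →L[ℝ] ℝ} (w d : Eu n)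
    (hD : HasFDerivAt p D w) : HasDerivAt (fun t : ℝ => p (w + t • d)) (D d) 0 := by
  have hline : HasDerivAt (fun t : ℝ => w + t • d) d 0 := by
    simpa using ((hasDerivAt_id (0:ℝ)).smul_const d).const_add w
  have hD' : HasFDerivAt p D (w + (0:ℝ) • d) := by simpa using hD
  exact hD'.comp_hasDerivAt 0 hline

lemma grad_ineq_aux {n : ℕ} {p : Eu n → ℝ} {w u : Eu n} {D : Eu n →L[ℝ] ℝ}
    (hD : HasFDerivAt p D w)
    (hconv : ∀ t ∈ Set.Ioc (0:ℝ) 1, p (w + t • (u - w)) ≤ (1-t) * p w + t * p u) :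
    p w + D (u - w) ≤ p u := by
  have h : D (u - w) ≤ p u - p w := by
    refine deriv_le_of_slope_aux _ (line_hasDerivAt_aux p w (u - w) hD) (fun t htt => ?_)
    have h0 : p (w + (0:ℝ) • (u - w)) = p w := by simp
    have := hconv t htt
    rw [h0, div_le_iff₀ htt.1]
    nlinarith [htt.1]
  linarith

lemma ereal_sub_add_cancel_aux (a : EReal) (r : ℝ) : a - (r:EReal) + r = a := by
  induction a using EReal.rec with
  | bot => simp
  | coe x => norm_cast; ring
  | top => simp

lemma quad_identity_aux {n : ℕ} (w u : Eu n) (a b : ℝ) (hab : a + b = 1) :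
    ‖a • w + b • u‖^2 = a*‖w‖^2 + b*‖u‖^2 - a*b*‖u - w‖^2 := by
  have h1 : ‖a • w + b • u‖^2 = a^2*‖w‖^2 + 2*(a*b)*⟪w,u⟫ + b^2*‖u‖^2 := by
    rw [norm_add_sq_real, real_inner_smul_left, real_inner_smul_right, norm_smul, norm_smul]
    simp [mul_pow, sq_abs]; ring
  have h2 : ‖u - w‖^2 = ‖u‖^2 - 2*⟪w,u⟫ + ‖w‖^2 := by
    rw [norm_sub_sq_real, real_inner_comm]
  rw [h1, h2]; linear_combination (a*‖w‖^2 + b*‖u‖^2)*hab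

lemma strong_seg_aux {n : ℕ} {m : ℝ} {g : Eu n → EReal}
    (hsc : ConvexFn (fun x => g x - ((m / 2 * ‖x‖ ^ 2 : ℝ) : EReal)))
    {w u : Eu n} {gw gu : ℝ} (hgw : g w = (gw:ℝ)) (hgu : g u = (gu:ℝ))
    {a b : ℝ} (ha : 0 ≤ a) (hb : 0 ≤ b) (hab : a + b = 1) :
    g (a • w + b • u) ≤ ((a*gw + b*gu - m/2*(a*b)*‖u-w‖^2 : ℝ) : EReal) := by
  have h := hsc w u a b ha hb hab
  simp only [hgw, hgu] at h
  set z := a • w + b • u with hz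
  have hrhs : (a : EReal) * ((gw:EReal) - ((m / 2 * ‖w‖ ^ 2 : ℝ) : EReal))
      + (b : EReal) * ((gu:EReal) - ((m / 2 * ‖u‖ ^ 2 : ℝ) : EReal))
      = ((a*(gw - m/2*‖w‖^2) + b*(gu - m/2*‖u‖^2) : ℝ) : EReal) := by
    rw [← EReal.coe_sub, ← EReal.coe_sub, ← EReal.coe_mul, ← EReal.coe_mul, ← EReal.coe_add]
  rw [hrhs] at h
  have h2 : g z ≤ ((a*(gw - m/2*‖w‖^2) + b*(gu - m/2*‖u‖^2) + m/2*‖z‖^2 : ℝ) : EReal) := by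
    calc g z = (g z - ((m / 2 * ‖z‖ ^ 2 : ℝ) : EReal)) + ((m / 2 * ‖z‖ ^ 2 : ℝ) : EReal) :=
          (ereal_sub_add_cancel_aux _ _).symm
      _ ≤ ((a*(gw - m/2*‖w‖^2) + b*(gu - m/2*‖u‖^2) : ℝ) : EReal)
            + ((m / 2 * ‖z‖ ^ 2 : ℝ) : EReal) := add_le_add_left h _
      _ = _ := by rw [← EReal.coe_add]
  refine h2.trans ?_
  rw [EReal.coe_le_coe_iff]
  have hq := quad_identity_aux w u a b hab
  rw [hz]
  apply le_of_eq
  linear_combination (m/2) * hq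

set_option maxHeartbeats 1000000 in
/-- The map `λ ↦ w*(λ)` sending `λ ∈ K*` to the unique minimizer of
`w ↦ g(w) + ⟨λ, φ(w)⟩` is continuous on `K*`. -/
theorem stmt6 {n r : ℕ} (m : ℝ) (hm : 0 < m) (g : Eu n → EReal)
    (hclosed : ClosedFn g) (hproper : ProperFn g) (hsc : StrongConvexFn m g)
    (K : Set (Eu r)) (hK : IsClosedConvexCone K)
    (φ : Eu n → Eu r) (hφ : ContDiff ℝ 1 φ) (hφK : KConvexFn K φ)
    (wstar : Eu r → Eu n)
    (hwstar : ∀ lam ∈ dualConeSet K,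
      IsUniqueMin (fun w => g w + ((⟪lam, φ w⟫ : ℝ) : EReal)) (wstar lam)) :
    ContinuousOn wstar (dualConeSet K) := by
  obtain ⟨hbot, x₀, hx₀⟩ := hproper
  set S := dualConeSet K with hS
  -- convexity along segments of `x ↦ ⟪lam, φ x⟫` for `lam ∈ S`
  have hPconv : ∀ lam ∈ S, ∀ w u : Eu n, ∀ a b : ℝ, 0 ≤ a → 0 ≤ b → a + b = 1 →
      ⟪lam, φ (a • w + b • u)⟫ ≤ a * ⟪lam, φ w⟫ + b * ⟪lam, φ u⟫ := by
    intro lam hlam w u a b ha hb hab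
    have hk := hφK w u a b ha hb hab
    have h0 := hlam _ hk
    rw [inner_sub_right, inner_add_right, real_inner_smul_right, real_inner_smul_right] at h0
    linarith
  -- minimality (≤ version)
  have hmin : ∀ lam ∈ S, ∀ z,
      g (wstar lam) + ((⟪lam, φ (wstar lam)⟫:ℝ):EReal) ≤ g z + ((⟪lam, φ z⟫:ℝ):EReal) := by
    intro lam hlam z
    rcases eq_or_ne z (wstar lam) with h | h
    · rw [h]
    · exact le_of_lt (hwstar lam hlam z h)
  -- finiteness of `g` at minimizers
  have hfin : ∀ lam ∈ S, ∃ gw : ℝ, g (wstar lam) = (gw : EReal) := by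
    intro lam hlam
    have h1 := hmin lam hlam x₀
    have h2 : g x₀ + ((⟪lam, φ x₀⟫:ℝ):EReal) < ⊤ :=
      EReal.add_lt_top hx₀.ne (EReal.coe_ne_top _)
    have hlt : g (wstar lam) + ((⟪lam, φ (wstar lam)⟫:ℝ):EReal) < ⊤ := h1.trans_lt h2
    have htop : g (wstar lam) ≠ ⊤ := by
      intro h
      rw [h, EReal.top_add_coe] at hlt
      exact lt_irrefl _ hlt
    exact ⟨(g (wstar lam)).toReal, (EReal.coe_toReal htop (hbot _).ne').symm⟩
  -- the key quantitative estimate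
  have key : ∀ lam ∈ S, ∀ mu ∈ S,
      ‖wstar mu - wstar lam‖ ≤ 4/m * (‖fderiv ℝ φ (wstar lam)‖ * ‖lam - mu‖) := by
    intro lam hlam mu hmu
    set w := wstar lam with hw
    set u := wstar mu with hu
    obtain ⟨gw, hgw⟩ := hfin lam hlam
    obtain ⟨gu, hgu⟩ := hfin mu hmu
    set A := fderiv ℝ φ w with hA
    have hApos : (0:ℝ) ≤ 4/m * (‖A‖ * ‖lam - mu‖) := by positivity
    rcases eq_or_ne u w with he | hne
    · rw [he]; simpa using hApos
    have htd : 0 < ‖u - w‖ := norm_pos_iff.mpr (sub_ne_zero.mpr hne)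
    have hseg : ∀ t : ℝ, w + t • (u - w) = (1-t) • w + t • u := by
      intro t; rw [smul_sub, sub_smul, one_smul]; abel
    have hφd : HasFDerivAt φ A w := (hφ.differentiable one_ne_zero w).hasFDerivAt
    have hDp : HasFDerivAt (fun x => ⟪lam, φ x⟫) ((innerSL ℝ lam).comp A) w := by
      exact ((innerSL ℝ lam).hasFDerivAt.comp w hφd)
    have hDq : HasFDerivAt (fun x => ⟪mu, φ x⟫) ((innerSL ℝ mu).comp A) w := by
      exact ((innerSL ℝ mu).hasFDerivAt.comp w hφd)
    -- Step 1: gradient inequality for the convex function `⟪mu, φ ·⟫`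
    have hstep1 : ⟪mu, φ w⟫ + ((innerSL ℝ mu).comp A) (u - w) ≤ ⟪mu, φ u⟫ := by
      refine grad_ineq_aux hDq (fun t htt => ?_)
      rw [hseg t]
      exact hPconv mu hmu w u (1-t) t (by linarith [htt.2]) htt.1.le (by ring)
    -- Step 2: `-∇⟪lam, φ ·⟫(w)` is a subgradient of `g` at `w`
    have hstep2 : gw - gu ≤ ((innerSL ℝ lam).comp A) (u - w) := by
      refine deriv_ge_of_slope_aux (fun t => ⟪lam, φ (w + t • (u - w))⟫)
        (line_hasDerivAt_aux _ w (u - w) hDp) (fun t htt => ?_)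
      have hgz : g ((1-t) • w + t • u)
          ≤ (((1-t)*gw + t*gu - m/2*((1-t)*t)*‖u-w‖^2 : ℝ) : EReal) :=
        strong_seg_aux hsc.2 hgw hgu (by linarith [htt.2]) htt.1.le (by ring)
      have hm1 := hmin lam hlam ((1-t) • w + t • u)
      rw [hgw] at hm1
      have hm2 : ((gw + ⟪lam, φ w⟫ : ℝ) : EReal)
          ≤ (((1-t)*gw + t*gu - m/2*((1-t)*t)*‖u-w‖^2
              + ⟪lam, φ ((1-t) • w + t • u)⟫ : ℝ) : EReal) := by
        rw [EReal.coe_add, EReal.coe_add]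
        exact hm1.trans (add_le_add_left hgz _)
      rw [EReal.coe_le_coe_iff] at hm2
      have h0 : (fun t : ℝ => ⟪lam, φ (w + t • (u - w))⟫) 0 = ⟪lam, φ w⟫ := by norm_num
      have hft : (fun t : ℝ => ⟪lam, φ (w + t • (u - w))⟫) t
          = ⟪lam, φ ((1-t) • w + t • u)⟫ := by
        show (⟪lam, φ (w + t • (u - w))⟫ : ℝ) = _
        rw [hseg t]
      beta_reduce at h0 hft
      rw [h0, hft, le_div_iff₀ htt.1]
      have hnn : 0 ≤ m/2*((1-t)*t)*‖u-w‖^2 := by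
        have : (0:ℝ) ≤ (1-t)*t := mul_nonneg (by linarith [htt.2]) htt.1.le
        positivity
      nlinarith
    -- Step 3: strong convexity growth at the minimizer `u` of `h_mu`
    have hstep3 : m/4 * ‖u - w‖^2 ≤ (gw + ⟪mu, φ w⟫) - (gu + ⟪mu, φ u⟫) := by
      set mid := (1/2:ℝ) • w + (1/2:ℝ) • u with hmid
      have hmidne : mid ≠ u := by
        intro h
        apply hne
        have hz : (1/2:ℝ) • (w - u) = 0 := by
          have hmu2 : mid - u = (1/2:ℝ) • (w - u) := by rw [hmid]; module
          rw [← hmu2, h, sub_self]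
        have := (smul_eq_zero.1 hz).resolve_left (by norm_num)
        rw [sub_eq_zero] at this
        rw [this]
      have hlt := hwstar mu hmu mid hmidne
      simp only at hlt
      rw [hgu] at hlt
      have hgm : g mid ≤ ((1/2*gw + 1/2*gu - m/2*(1/2*(1/2))*‖u-w‖^2 : ℝ) : EReal) :=
        strong_seg_aux hsc.2 hgw hgu (by norm_num) (by norm_num) (by norm_num)
      have hpm : ⟪mu, φ mid⟫ ≤ 1/2 * ⟪mu, φ w⟫ + 1/2 * ⟪mu, φ u⟫ :=
        hPconv mu hmu w u (1/2) (1/2) (by norm_num) (by norm_num) (by norm_num)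
      have hchain : ((gu + ⟪mu, φ u⟫ : ℝ) : EReal)
          < ((1/2*gw + 1/2*gu - m/2*(1/2*(1/2))*‖u-w‖^2
              + (1/2 * ⟪mu, φ w⟫ + 1/2 * ⟪mu, φ u⟫) : ℝ) : EReal) := by
        rw [EReal.coe_add, EReal.coe_add]
        refine hlt.trans_le (add_le_add hgm ?_)
        exact_mod_cast hpm
      rw [EReal.coe_lt_coe_iff] at hchain
      nlinarith
    -- combine
    have hcomb : ((innerSL ℝ lam).comp A) (u - w) - ((innerSL ℝ mu).comp A) (u - w)
        = ⟪lam - mu, A (u - w)⟫ := by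
      simp [inner_sub_left]
    have hub : ⟪lam - mu, A (u - w)⟫ ≤ ‖lam - mu‖ * (‖A‖ * ‖u - w‖) := by
      calc ⟪lam - mu, A (u - w)⟫ ≤ ‖lam - mu‖ * ‖A (u - w)‖ := real_inner_le_norm _ _
        _ ≤ ‖lam - mu‖ * (‖A‖ * ‖u - w‖) := by gcongr; exact A.le_opNorm _
    have hfinal : m * ‖u - w‖ ≤ 4 * (‖A‖ * ‖lam - mu‖) := by nlinarith
    rw [div_mul_eq_mul_div, le_div_iff₀ hm]
    nlinarith
  -- conclude continuity
  intro lam0 hlam0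
  have hg0 : Tendsto (fun mu : Eu r => 4/m * (‖fderiv ℝ φ (wstar lam0)‖ * dist lam0 mu))
      (𝓝[S] lam0) (𝓝 0) := by
    have hc : Continuous (fun mu : Eu r => 4/m * (‖fderiv ℝ φ (wstar lam0)‖ * dist lam0 mu)) :=
      continuous_const.mul (continuous_const.mul (continuous_const.dist continuous_id))
    refine Tendsto.mono_left ?_ (nhdsWithin_le_nhds (s := S))
    simpa using hc.tendsto lam0
  refine tendsto_iff_dist_tendsto_zero.mpr (squeeze_zero'
    (eventually_nhdsWithin_of_forall fun mu _ => dist_nonneg)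
    (eventually_nhdsWithin_of_forall fun mu hmu => ?_) hg0)
  rw [dist_eq_norm, dist_eq_norm]
  exact key lam0 hlam0 mu hmu
end
end

section
/- Let g : ℝⁿ → ℝ ∪ {∞} be closed, proper, and m-strongly convex (m > 0), K ⊂ ℝʳ a closed convex cone, and φ : ℝⁿ → ℝʳ continuously differentiable and K-convex, and for λ ∈ K* let w*(λ) denote the unique minimizer of w ↦ g(w) + ⟨λ, φ(w)⟩. Then for every M > 0, every λ ∈ K* with ‖λ‖ ≤ M, every w' ∈ dom g, and every v ∈ ∂g(w'): ‖w*(λ) − w'‖ ≤ (2/m)·(‖v‖ + M‖Dφ(w')‖ + √(m M ‖φ(w')‖)), where ‖Dφ(w')‖ is the operator norm of the derivative of φ at w'. In particular, the minimizers w*(λ) are uniformly bounded as λ ranges over any bounded subset of K*. -/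
open scoped RealInnerProductSpace
open Filter Topology

noncomputable section

lemma my_norm_combo_sq {n : ℕ} (x y : Eu n) {a b : ℝ} (hab : a + b = 1) :
    ‖a • x + b • y‖ ^ 2 = a * ‖x‖ ^ 2 + b * ‖y‖ ^ 2 - a * b * ‖x - y‖ ^ 2 := by
  have e : ∀ v : Eu n, ‖v‖ ^ 2 = ⟪v, v⟫ := fun v => (real_inner_self_eq_norm_sq v).symm
  rw [e, e, e, e]
  have hb : b = 1 - a := by linarith
  subst hb
  simp only [inner_add_left, inner_add_right, inner_sub_left, inner_sub_right,
    real_inner_smul_left, real_inner_smul_right, real_inner_comm y x]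
  ring

lemma my_grad_ineq {n : ℕ} {ψ : Eu n → ℝ} (hc : ConvexOn ℝ Set.univ ψ)
    {ψ' : Eu n →L[ℝ] ℝ} {y : Eu n} (hd : HasFDerivAt ψ ψ' y) (x : Eu n) :
    ψ y + ψ' (x - y) ≤ ψ x := by
  set u := x - y with hu
  have h1 : HasDerivAt (fun t : ℝ => y + t • u) u 0 := by
    simpa using ((hasDerivAt_id (0 : ℝ)).smul_const u).const_add y
  have hline : HasDerivAt (fun t : ℝ => ψ (y + t • u)) (ψ' u) 0 := by
    have hd' : HasFDerivAt ψ ψ' (y + (0:ℝ) • u) := by simpa using hd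
    exact hd'.comp_hasDerivAt 0 h1
  have hfc : ConvexOn ℝ Set.univ (fun t : ℝ => ψ (y + t • u)) := by
    refine ⟨convex_univ, ?_⟩
    intro t _ s _ a b ha hb hab
    have hcomb : a • (y + t • u) + b • (y + s • u) = (a + b) • y + (a * t + b * s) • u := by
      module
    rw [hab, one_smul] at hcomb
    have := hc.2 (Set.mem_univ (y + t • u)) (Set.mem_univ (y + s • u)) ha hb hab
    simpa [smul_eq_mul, ← hcomb] using this
  have hs := hfc.le_slope_of_hasDerivAt (Set.mem_univ (0:ℝ)) (Set.mem_univ (1:ℝ))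
    zero_lt_one hline
  have heq : slope (fun t : ℝ => ψ (y + t • u)) 0 1 = ψ x - ψ y := by
    simp [slope, hu]
  rw [heq] at hs
  linarith

set_option maxHeartbeats 1000000 in
/-- A uniform bound on the minimizers `w*(λ)`: for `‖λ‖ ≤ M`, `w' ∈ dom g` and
`v ∈ ∂g(w')`, one has `‖w*(λ) − w'‖ ≤ (2/m)(‖v‖ + M‖Dφ(w')‖ + √(m M ‖φ(w')‖))`. In particular
the minimizers are uniformly bounded as `λ` ranges over any bounded subset of `K*`. -/
theorem stmt7 {n r : ℕ} (m : ℝ) (hm : 0 < m) (g : Eu n → EReal)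
    (hclosed : ClosedFn g) (hproper : ProperFn g) (hsc : StrongConvexFn m g)
    (K : Set (Eu r)) (hK : IsClosedConvexCone K)
    (φ : Eu n → Eu r) (hφ : ContDiff ℝ 1 φ) (hφK : KConvexFn K φ)
    (wstar : Eu r → Eu n)
    (hwstar : ∀ lam ∈ dualConeSet K,
      IsUniqueMin (fun w => g w + ((⟪lam, φ w⟫ : ℝ) : EReal)) (wstar lam)) :
    (∀ M : ℝ, 0 < M → ∀ lam ∈ dualConeSet K, ‖lam‖ ≤ M →
      ∀ w' ∈ edom g, ∀ v ∈ subdiff g w',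
        ‖wstar lam - w'‖ ≤
          (2 / m) * (‖v‖ + M * ‖fderiv ℝ φ w'‖ + Real.sqrt (m * M * ‖φ w'‖))) ∧
    (∀ B : Set (Eu r), Bornology.IsBounded B →
      ∃ R : ℝ, ∀ lam ∈ B ∩ dualConeSet K, ‖wstar lam‖ ≤ R) := by
  have hφd : Differentiable ℝ φ := hφ.differentiable one_ne_zero
  have hbot := hproper.1
  have part1 : ∀ M : ℝ, 0 < M → ∀ lam ∈ dualConeSet K, ‖lam‖ ≤ M →
      ∀ w' ∈ edom g, ∀ v ∈ subdiff g w',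
        ‖wstar lam - w'‖ ≤
          (2 / m) * (‖v‖ + M * ‖fderiv ℝ φ w'‖ + Real.sqrt (m * M * ‖φ w'‖)) := by
    intro M hM lam hlam hlamM w' hw' v hv
    set x := wstar lam with hxdef
    set ψ : Eu n → ℝ := fun w => ⟪lam, φ w⟫ with hψdef
    have hψc : ConvexOn ℝ Set.univ ψ := by
      refine ⟨convex_univ, ?_⟩
      intro p _ q _ a b ha hb hab
      have h0 := hlam _ (hφK p q a b ha hb hab)
      simp only [inner_sub_right, inner_add_right, real_inner_smul_right] at h0
      simp only [hψdef, smul_eq_mul]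
      linarith
    have hψd : HasFDerivAt ψ ((innerSL ℝ lam).comp (fderiv ℝ φ w')) w' :=
      ((innerSL ℝ lam).hasFDerivAt).comp w' (hφd w').hasFDerivAt
    have hmin : ∀ z, g x + ((ψ x : ℝ) : EReal) ≤ g z + ((ψ z : ℝ) : EReal) := by
      intro z
      rcases eq_or_ne z x with rfl | hz
      · exact le_rfl
      · exact (hwstar lam hlam z hz).le
    have hgw'top : g w' ≠ ⊤ := LT.lt.ne hw'
    have hgxtop : g x ≠ ⊤ := by
      intro h
      have h1 := hmin w'
      rw [h] at h1
      have h2 : g w' + ((ψ w' : ℝ) : EReal) < ⊤ :=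
        EReal.add_lt_top hgw'top (EReal.coe_ne_top _)
      have h3 : (⊤ : EReal) + ((ψ x : ℝ) : EReal) = ⊤ := by
        rw [EReal.top_add_coe]
      rw [h3] at h1
      exact absurd (lt_of_le_of_lt h1 h2) (lt_irrefl _)
    set Gx : ℝ := (g x).toReal with hGxdef
    set Gy : ℝ := (g w').toReal with hGydef
    have hgx : ((Gx : ℝ) : EReal) = g x := EReal.coe_toReal hgxtop (hbot x).ne'
    have hgy : ((Gy : ℝ) : EReal) = g w' := EReal.coe_toReal hgw'top (hbot w').ne'
    set d : ℝ := ‖x - w'‖ with hddef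
    have key : ∀ b ∈ Set.Ioo (0:ℝ) 1,
        m / 2 * (1 - b) * d ^ 2 ≤ (Gy + ψ w') - (Gx + ψ x) := by
      intro b hb
      obtain ⟨hb0, hb1⟩ := hb
      have ha0 : (0:ℝ) ≤ 1 - b := by linarith
      have hab : (1 - b) + b = 1 := by ring
      set z : Eu n := (1 - b) • x + b • w' with hzdef
      have hzdom : z ∈ edom g :=
        hsc.1 (show x ∈ edom g from lt_top_iff_ne_top.2 hgxtop) hw' ha0 hb0.le hab
      have hgztop : g z ≠ ⊤ := LT.lt.ne hzdom
      set Gz : ℝ := (g z).toReal with hGzdef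
      have hgz : ((Gz : ℝ) : EReal) = g z := EReal.coe_toReal hgztop (hbot z).ne'
      have hscz := hsc.2 x w' (1 - b) b ha0 hb0.le hab
      simp only at hscz
      rw [← hzdef, ← hgx, ← hgy, ← hgz] at hscz
      norm_cast at hscz
      have hminz := hmin z
      rw [← hgx, ← hgz] at hminz
      norm_cast at hminz
      have hψz : ψ z ≤ (1 - b) * ψ x + b * ψ w' := by
        have := hψc.2 (Set.mem_univ x) (Set.mem_univ w') ha0 hb0.le hab
        simpa [smul_eq_mul, ← hzdef] using this
      have hni : ‖z‖ ^ 2 = (1 - b) * ‖x‖ ^ 2 + b * ‖w'‖ ^ 2 - (1 - b) * b * d ^ 2 := by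
        rw [hzdef, hddef]
        exact my_norm_combo_sq x w' hab
      rw [hni] at hscz
      have hcomb : b * (m / 2 * (1 - b) * d ^ 2) ≤ b * ((Gy + ψ w') - (Gx + ψ x)) := by
        nlinarith [hscz, hminz, hψz]
      exact (mul_le_mul_iff_right₀ hb0).mp hcomb
    have hΔ : m / 2 * d ^ 2 ≤ (Gy + ψ w') - (Gx + ψ x) := by
      have ht : Filter.Tendsto (fun b : ℝ => m / 2 * (1 - b) * d ^ 2)
          (nhdsWithin 0 (Set.Ioi 0)) (nhds (m / 2 * (1 - 0) * d ^ 2)) :=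
        Filter.Tendsto.mono_left (Continuous.tendsto (by continuity) 0) nhdsWithin_le_nhds
      have hev : ∀ᶠ b in nhdsWithin (0:ℝ) (Set.Ioi 0),
          m / 2 * (1 - b) * d ^ 2 ≤ (Gy + ψ w') - (Gx + ψ x) := by
        filter_upwards [Ioo_mem_nhdsGT_of_mem (by norm_num : (0:ℝ) ∈ Set.Ico 0 1)] with b hb
          using key b hb
      have := le_of_tendsto ht hev
      simpa using this
    have hsub := hv x
    rw [← hgx, ← hgy] at hsub
    norm_cast at hsub
    have hvb : -⟪v, x - w'⟫ ≤ ‖v‖ * d := by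
      have h1 := abs_real_inner_le_norm v (x - w')
      have h2 := neg_abs_le (⟪v, x - w'⟫ : ℝ)
      rw [hddef]; linarith
    have hgd := my_grad_ineq hψc hψd x
    have hDb : -(((innerSL ℝ lam).comp (fderiv ℝ φ w')) (x - w')) ≤ M * ‖fderiv ℝ φ w'‖ * d := by
      have h1 : |(((innerSL ℝ lam).comp (fderiv ℝ φ w')) (x - w'))|
          ≤ ‖lam‖ * (‖fderiv ℝ φ w'‖ * d) := by
        have h2 : (((innerSL ℝ lam).comp (fderiv ℝ φ w')) (x - w'))
            = ⟪lam, (fderiv ℝ φ w') (x - w')⟫ := rfl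
        rw [h2, hddef]
        exact (abs_real_inner_le_norm _ _).trans
          (mul_le_mul_of_nonneg_left ((fderiv ℝ φ w').le_opNorm _) (norm_nonneg _))
      have h3 : ‖lam‖ * (‖fderiv ℝ φ w'‖ * d) ≤ M * (‖fderiv ℝ φ w'‖ * d) := by
        apply mul_le_mul_of_nonneg_right hlamM
        exact mul_nonneg (norm_nonneg _) (norm_nonneg _)
      have h4 := neg_abs_le ((((innerSL ℝ lam).comp (fderiv ℝ φ w')) (x - w')))
      linarith [h1, h3, h4]
    have hA : m / 2 * d ^ 2 ≤ (‖v‖ + M * ‖fderiv ℝ φ w'‖) * d := by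
      have : (‖v‖ + M * ‖fderiv ℝ φ w'‖) * d = ‖v‖ * d + M * ‖fderiv ℝ φ w'‖ * d := by ring
      rw [this]
      linarith [hΔ, hsub, hgd, hvb, hDb]
    have hsqrt : 0 ≤ Real.sqrt (m * M * ‖φ w'‖) := Real.sqrt_nonneg _
    have hd0 : 0 ≤ d := norm_nonneg _
    rcases eq_or_lt_of_le hd0 with hd | hd
    · rw [hddef] at hd ⊢
      rw [← hd]
      have : 0 ≤ ‖v‖ + M * ‖fderiv ℝ φ w'‖ + Real.sqrt (m * M * ‖φ w'‖) := by positivity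
      positivity
    · show d ≤ _
      rw [div_mul_eq_mul_div, le_div_iff₀ hm]
      nlinarith [mul_nonneg hsqrt hd0]
  refine ⟨part1, ?_⟩
  intro B hB
  obtain ⟨M0, hM0⟩ := hB.exists_norm_le
  set M : ℝ := max M0 1 with hMdef
  have hM : 0 < M := lt_of_lt_of_le one_pos (le_max_right _ _)
  have h0K : (0 : Eu r) ∈ dualConeSet K := by
    intro z hz; simp
  set w' : Eu n := wstar 0 with hw'def
  have hmin0 : ∀ z, g w' ≤ g z := by
    intro z
    rcases eq_or_ne z w' with rfl | hz
    · exact le_rfl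
    · have h := (hwstar 0 h0K z hz).le
      simpa using h
  have hw'dom : w' ∈ edom g := by
    obtain ⟨x0, hx0⟩ := hproper.2
    exact lt_of_le_of_lt (hmin0 x0) hx0
  have hv0 : (0 : Eu n) ∈ subdiff g w' := by
    intro z
    simpa using hmin0 z
  refine ⟨‖w'‖ + (2 / m) * (‖(0 : Eu n)‖ + M * ‖fderiv ℝ φ w'‖
      + Real.sqrt (m * M * ‖φ w'‖)), ?_⟩
  intro lam hlam
  have hlamM : ‖lam‖ ≤ M := le_trans (hM0 lam hlam.1) (le_max_left _ _)
  have hb := part1 M hM lam hlam.2 hlamM w' hw'dom 0 hv0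
  have htri : ‖wstar lam‖ ≤ ‖wstar lam - w'‖ + ‖w'‖ := by
    have := norm_add_le (wstar lam - w') w'
    simpa using this
  linarith
end
end

section
/- Let g : ℝⁿ → ℝ ∪ {∞} be closed, proper, and m-strongly convex (m > 0), K ⊂ ℝʳ a closed convex cone, and φ : ℝⁿ → ℝʳ continuously differentiable and K-convex; let ḡ*(λ) = inf_w (g(w) + ⟨λ, φ(w)⟩) and w*(λ) its unique minimizer for λ ∈ K*. Then for all λ, λ̄ ∈ K*, with w̄ = w*(λ̄): −ḡ*(λ) ≤ −ḡ*(λ̄) + ⟨λ − λ̄, −φ(w̄)⟩ + (1/(2m)) ‖Dφ(w̄)ᵀ(λ − λ̄)‖², i.e. −ḡ* is majorized on K* by a convex quadratic anchored at λ̄. -/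
open scoped RealInnerProductSpace
open Filter Topology

noncomputable section

lemma line_deriv_tendsto {n r : ℕ} (φ : Eu n → Eu r) (hφ : ContDiff ℝ 1 φ)
    (x d : Eu n) :
    Tendsto (fun t : ℝ => t⁻¹ • (φ (x + t • d) - φ x)) (𝓝[>] 0)
      (𝓝 (fderiv ℝ φ x d)) := by
  have hd : HasDerivAt (fun t : ℝ => φ (x + t • d)) (fderiv ℝ φ x d) 0 := by
    have h1 : HasDerivAt (fun t : ℝ => x + t • d) d 0 := by
      simpa using ((hasDerivAt_id (0:ℝ)).smul_const d).const_add x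
    have h2 : HasFDerivAt φ (fderiv ℝ φ x) (x + (0:ℝ) • d) := by
      simpa using ((hφ.differentiable one_ne_zero) x).hasFDerivAt
    exact (h2.comp_hasDerivAt 0 h1)
  have hs := hasDerivAt_iff_tendsto_slope.mp hd
  have hmono : (𝓝[>] (0:ℝ)) ≤ (𝓝[≠] (0:ℝ)) :=
    nhdsWithin_mono _ (fun t ht => ne_of_gt ht)
  have := hs.mono_left hmono
  refine this.congr (fun t => ?_)
  simp [slope_def_module]

lemma kconv_mem {n r : ℕ} {K : Set (Eu r)} (hK : IsClosedConvexCone K)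
    {φ : Eu n → Eu r} (hφ : ContDiff ℝ 1 φ) (hφK : KConvexFn K φ)
    (x w : Eu n) : φ w - φ x - fderiv ℝ φ x (w - x) ∈ K := by
  have hmem : ∀ t ∈ Set.Ioo (0:ℝ) 1,
      (φ w - φ x) - t⁻¹ • (φ (x + t • (w - x)) - φ x) ∈ K := by
    intro t ht
    have h := hφK w x t (1 - t) (le_of_lt ht.1) (by linarith [ht.2]) (by ring)
    have h2 := hK.2.2 t⁻¹ (le_of_lt (inv_pos.mpr ht.1)) _ h
    have hx : t • w + (1 - t) • x = x + t • (w - x) := by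
      simp [smul_sub, sub_smul]; abel
    rw [hx] at h2
    have ht0 : t ≠ 0 := ne_of_gt ht.1
    convert h2 using 1
    match_scalars <;> (field_simp; try ring)
  have hlim := line_deriv_tendsto φ hφ x (w - x)
  have hT : Tendsto (fun t : ℝ => (φ w - φ x) - t⁻¹ • (φ (x + t • (w - x)) - φ x))
      (𝓝[>] 0) (𝓝 (φ w - φ x - fderiv ℝ φ x (w - x))) := tendsto_const_nhds.sub hlim
  refine hK.1.mem_of_tendsto hT ?_
  filter_upwards [Ioo_mem_nhdsGT_of_mem (Set.left_mem_Ico.mpr one_pos)] with t ht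
  exact hmem t ht

lemma norm_combo {n : ℕ} (x y : Eu n) (t : ℝ) :
    ‖t • x + (1 - t) • y‖ ^ 2
      = t * ‖x‖ ^ 2 + (1 - t) * ‖y‖ ^ 2 - t * (1 - t) * ‖x - y‖ ^ 2 := by
  simp only [← real_inner_self_eq_norm_sq, inner_add_add_self, inner_sub_sub_self,
    real_inner_smul_left, real_inner_smul_right]
  ring

lemma quad_bound {n : ℕ} (m : ℝ) (hm : 0 < m) (d v : Eu n) :
    -(1 / (2 * m) * ‖v‖ ^ 2) ≤ m / 2 * ‖d‖ ^ 2 + ⟪v, d⟫ := by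
  have key : 0 ≤ m ^ 2 * ‖d‖ ^ 2 + 2 * m * ⟪v, d⟫ + ‖v‖ ^ 2 := by
    have h := sq_nonneg ‖m • d + v‖
    rw [norm_add_sq_real, norm_smul, real_inner_smul_left, Real.norm_eq_abs,
      abs_of_pos hm] at h
    nlinarith [real_inner_comm v d]
  have e : (2 * m) * (1 / (2 * m)) = 1 := by field_simp
  nlinarith [key, e, hm.le, mul_pos two_pos hm]

lemma ereal_sub_le {x : EReal} {c C : ℝ} (h : x - (c:EReal) ≤ (C:EReal)) :
    x ≤ ((C + c : ℝ) : EReal) := by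
  rcases eq_or_ne x ⊤ with hx | hx
  · rw [hx, EReal.top_sub_coe] at h
    exact absurd h (not_le.mpr (EReal.coe_lt_top C))
  · rcases eq_or_ne x ⊥ with hb | hb
    · rw [hb]; exact bot_le
    · obtain ⟨y, rfl⟩ : ∃ y : ℝ, x = (y:EReal) :=
        ⟨x.toReal, (EReal.coe_toReal hx hb).symm⟩
      rw [← EReal.coe_sub, EReal.coe_le_coe_iff] at h
      rw [EReal.coe_le_coe_iff]
      linarith

/-- The Lipschitz-smoothness-type majorization of `−ḡ*`: for all `λ, λ̄ ∈ K*`,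
with `w̄ = w*(λ̄)`,
`−ḡ*(λ) ≤ −ḡ*(λ̄) + ⟨λ − λ̄, −φ(w̄)⟩ + (1/(2m)) ‖Dφ(w̄)ᵀ(λ − λ̄)‖²`. -/
theorem stmt8 {n r : ℕ} (m : ℝ) (hm : 0 < m) (g : Eu n → EReal)
    (hclosed : ClosedFn g) (hproper : ProperFn g) (hsc : StrongConvexFn m g)
    (K : Set (Eu r)) (hK : IsClosedConvexCone K)
    (φ : Eu n → Eu r) (hφ : ContDiff ℝ 1 φ) (hφK : KConvexFn K φ)
    (wstar : Eu r → Eu n)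
    (hwstar : ∀ lam ∈ dualConeSet K,
      IsUniqueMin (fun w => g w + ((⟪lam, φ w⟫ : ℝ) : EReal)) (wstar lam)) :
    ∀ lam ∈ dualConeSet K, ∀ lamb ∈ dualConeSet K,
      -(dualFn g φ lam) ≤ -(dualFn g φ lamb) +
        ((⟪lam - lamb, -φ (wstar lamb)⟫ +
          1 / (2 * m) *
            ‖(ContinuousLinearMap.adjoint (fderiv ℝ φ (wstar lamb))) (lam - lamb)‖ ^ 2 : ℝ) :
          EReal) := by
  intro lam hlam lamb hlamb
  set wb := wstar lamb with hwbdef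
  -- non-strict minimality of wb
  have hmin : ∀ z, g wb + ((⟪lamb, φ wb⟫ : ℝ) : EReal) ≤ g z + ((⟪lamb, φ z⟫ : ℝ) : EReal) := by
    intro z
    rcases eq_or_ne z wb with h | h
    · rw [h]
    · exact le_of_lt (hwstar lamb hlamb z h)
  -- g wb is real
  obtain ⟨x0, hx0⟩ := hproper.2
  have hwbT : g wb ≠ ⊤ := by
    intro htop
    have h := hmin x0
    rw [htop] at h
    simp only [EReal.top_add_of_ne_bot (EReal.coe_ne_bot _), top_le_iff] at h
    exact absurd h (ne_of_lt (EReal.add_lt_top (ne_of_lt hx0) (EReal.coe_ne_top _)))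
  obtain ⟨gwb, hgwb⟩ : ∃ c : ℝ, g wb = (c : EReal) :=
    ⟨(g wb).toReal, (EReal.coe_toReal hwbT (ne_of_gt (hproper.1 wb))).symm⟩
  set D := fderiv ℝ φ wb with hD
  set v : Eu r → Eu n := fun u => (ContinuousLinearMap.adjoint D) u with hv
  set a : ℝ := gwb + ⟪lamb, φ wb⟫ with ha
  set q : ℝ := 1 / (2 * m) * ‖v (lam - lamb)‖ ^ 2 with hq
  set p' : ℝ := ⟪lam - lamb, φ wb⟫ with hp'
  have hval : g wb + ((⟪lamb, φ wb⟫ : ℝ) : EReal) = ((a : ℝ) : EReal) := by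
    rw [hgwb, ha]; norm_cast
  -- dual value at lamb
  have hdualb : dualFn g φ lamb = ((a : ℝ) : EReal) := by
    refine le_antisymm ?_ ?_
    · exact iInf_le_of_le wb (le_of_eq hval)
    · exact le_iInf fun z => hval ▸ hmin z
  -- key step 2: strong convexity limit bound, for w with g w real
  have hstep2 : ∀ (w : Eu n) (gw : ℝ), g w = (gw : EReal) →
      gwb + m / 2 * ‖w - wb‖ ^ 2 ≤ gw + ⟪lamb, D (w - wb)⟫ := by
    intro w gw hgw
    set d := w - wb with hd2
    -- for each t ∈ (0,1), derive the real inequality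
    have hIoo : ∀ t ∈ Set.Ioo (0:ℝ) 1,
        (0:ℝ) ≤ (gw - gwb) - m / 2 * (1 - t) * ‖d‖ ^ 2
          + t⁻¹ * ⟪lamb, φ (wb + t • d) - φ wb⟫ := by
      intro t ht
      have ht0 : (0:ℝ) < t := ht.1
      have ht1 : t < 1 := ht.2
      have hcvx := hsc.2 w wb t (1 - t) (le_of_lt ht0) (by linarith) (by ring)
      set zt := t • w + (1 - t) • wb with hzt
      have hztd : zt = wb + t • d := by
        rw [hzt, hd2]; simp [smul_sub, sub_smul]; abel
      -- rewrite RHS of hcvx as a real coercion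
      have hR : (t : EReal) * (g w - ((m / 2 * ‖w‖ ^ 2 : ℝ) : EReal))
            + ((1 - t : ℝ) : EReal) * (g wb - ((m / 2 * ‖wb‖ ^ 2 : ℝ) : EReal))
          = ((t * (gw - m / 2 * ‖w‖ ^ 2) + (1 - t) * (gwb - m / 2 * ‖wb‖ ^ 2) : ℝ) : EReal) := by
        rw [hgw, hgwb]; norm_cast
      simp only at hcvx
      rw [hR] at hcvx
      have hle : g zt ≤ ((t * (gw - m / 2 * ‖w‖ ^ 2) + (1 - t) * (gwb - m / 2 * ‖wb‖ ^ 2)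
          + m / 2 * ‖zt‖ ^ 2 : ℝ) : EReal) := ereal_sub_le hcvx
      have hmin2 := hmin zt
      rw [hval] at hmin2
      have hchain : ((a : ℝ) : EReal)
          ≤ ((t * (gw - m / 2 * ‖w‖ ^ 2) + (1 - t) * (gwb - m / 2 * ‖wb‖ ^ 2)
            + m / 2 * ‖zt‖ ^ 2 + ⟪lamb, φ zt⟫ : ℝ) : EReal) := by
        calc ((a : ℝ) : EReal) ≤ g zt + ((⟪lamb, φ zt⟫ : ℝ) : EReal) := hmin2
        _ ≤ _ := by
            rw [show ((t * (gw - m / 2 * ‖w‖ ^ 2) + (1 - t) * (gwb - m / 2 * ‖wb‖ ^ 2)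
              + m / 2 * ‖zt‖ ^ 2 + ⟪lamb, φ zt⟫ : ℝ) : EReal)
              = ((t * (gw - m / 2 * ‖w‖ ^ 2) + (1 - t) * (gwb - m / 2 * ‖wb‖ ^ 2)
              + m / 2 * ‖zt‖ ^ 2 : ℝ) : EReal) + ((⟪lamb, φ zt⟫ : ℝ) : EReal) by norm_cast]
            exact add_le_add hle le_rfl
      rw [EReal.coe_le_coe_iff] at hchain
      have hnc : ‖zt‖ ^ 2 = t * ‖w‖ ^ 2 + (1 - t) * ‖wb‖ ^ 2 - t * (1 - t) * ‖d‖ ^ 2 := by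
        rw [hzt, norm_combo, hd2]
      have hinner : ⟪lamb, φ zt⟫ = ⟪lamb, φ (wb + t • d)⟫ := by rw [hztd]
      -- derive: 0 ≤ t*(gw - gwb) - m/2*t*(1-t)*‖d‖^2 + ⟪lamb, φ (wb + t•d) - φ wb⟫
      have h0 : 0 ≤ t * (gw - gwb) - m / 2 * t * (1 - t) * ‖d‖ ^ 2
          + ⟪lamb, φ (wb + t • d) - φ wb⟫ := by
        rw [inner_sub_right]
        rw [hnc, hinner] at hchain
        rw [ha] at hchain
        linarith
      have := mul_le_mul_of_nonneg_left h0 (le_of_lt (inv_pos.mpr ht0))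
      rw [mul_zero] at this
      calc (0:ℝ) ≤ t⁻¹ * (t * (gw - gwb) - m / 2 * t * (1 - t) * ‖d‖ ^ 2
          + ⟪lamb, φ (wb + t • d) - φ wb⟫) := this
      _ = (gw - gwb) - m / 2 * (1 - t) * ‖d‖ ^ 2
          + t⁻¹ * ⟪lamb, φ (wb + t • d) - φ wb⟫ := by
          field_simp
    -- take the limit t → 0+
    have hlim := line_deriv_tendsto φ hφ wb d
    have hlimi : Tendsto (fun t : ℝ => t⁻¹ * ⟪lamb, φ (wb + t • d) - φ wb⟫)
        (𝓝[>] 0) (𝓝 ⟪lamb, D d⟫) := by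
      have : Tendsto (fun t : ℝ => (⟪lamb, t⁻¹ • (φ (wb + t • d) - φ wb)⟫ : ℝ))
          (𝓝[>] 0) (𝓝 ⟪lamb, D d⟫) := (Tendsto.inner tendsto_const_nhds hlim)
      refine this.congr fun t => ?_
      rw [real_inner_smul_right]
    have hlimc : Tendsto (fun t : ℝ => (gw - gwb) - m / 2 * (1 - t) * ‖d‖ ^ 2
        + t⁻¹ * ⟪lamb, φ (wb + t • d) - φ wb⟫) (𝓝[>] 0)
        (𝓝 ((gw - gwb) - m / 2 * (1 - 0) * ‖d‖ ^ 2 + ⟪lamb, D d⟫)) := by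
      refine Tendsto.add ?_ hlimi
      refine Tendsto.mono_left ?_ nhdsWithin_le_nhds
      exact (Continuous.tendsto (by fun_prop) 0)
    have hge : (0:ℝ) ≤ (gw - gwb) - m / 2 * (1 - 0) * ‖d‖ ^ 2 + ⟪lamb, D d⟫ := by
      refine ge_of_tendsto hlimc ?_
      filter_upwards [Ioo_mem_nhdsGT_of_mem (Set.left_mem_Ico.mpr one_pos)] with t ht
      exact hIoo t ht
    simp only [sub_zero, mul_one] at hge
    linarith
  -- step 1 + final per-w bound (real part)
  have hperw : ∀ (w : Eu n) (gw : ℝ), g w = (gw : EReal) →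
      a + p' - q ≤ gw + ⟪lam, φ w⟫ := by
    intro w gw hgw
    set d := w - wb with hd2
    have hK1 : 0 ≤ ⟪lam, φ w - φ wb - D d⟫ := hlam _ (kconv_mem hK hφ hφK wb w)
    have hs2 := hstep2 w gw hgw
    have hadj : ⟪lam - lamb, D d⟫ = ⟪v (lam - lamb), d⟫ :=
      (ContinuousLinearMap.adjoint_inner_left D d (lam - lamb)).symm
    have hquad := quad_bound m hm d (v (lam - lamb))
    have hsplit : ⟪lam, D d⟫ = ⟪lamb, D d⟫ + ⟪lam - lamb, D d⟫ := by
      rw [inner_sub_left]; ring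
    have hsplit2 : ⟪lam, φ wb⟫ = ⟪lamb, φ wb⟫ + p' := by
      rw [hp', inner_sub_left]; ring
    rw [inner_sub_right, inner_sub_right] at hK1
    rw [ha, hq]
    rw [hadj] at hsplit
    linarith
  -- EReal per-w bound
  have hlow : ((a + p' - q : ℝ) : EReal) ≤ dualFn g φ lam := by
    refine le_iInf fun w => ?_
    rcases eq_or_ne (g w) ⊤ with hT | hT
    · rw [hT, EReal.top_add_of_ne_bot (EReal.coe_ne_bot _)]
      exact le_top
    · obtain ⟨gw, hgw⟩ : ∃ c : ℝ, g w = (c : EReal) :=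
        ⟨(g w).toReal, (EReal.coe_toReal hT (ne_of_gt (hproper.1 w))).symm⟩
      rw [hgw, ← EReal.coe_add, EReal.coe_le_coe_iff]
      exact hperw w gw hgw
  -- conclude
  rw [hdualb]
  have hrhs : -((a : ℝ) : EReal) +
      ((⟪lam - lamb, -φ wb⟫ + 1 / (2 * m) * ‖v (lam - lamb)‖ ^ 2 : ℝ) : EReal)
      = ((-a + (-p' + q) : ℝ) : EReal) := by
    rw [show (⟪lam - lamb, -φ wb⟫ : ℝ) = -p' by rw [hp', inner_neg_right], ← hq]
    norm_cast
  rw [hrhs]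
  rw [EReal.neg_le]
  rw [show (-((-a + (-p' + q) : ℝ) : EReal)) = ((a + p' - q : ℝ) : EReal) by
    rw [← EReal.coe_neg]; norm_cast; ring]
  exact hlow
end
end

section
/- Let g : ℝⁿ → ℝ ∪ {∞} be closed, proper, and m-strongly convex (m > 0), K ⊂ ℝʳ a closed convex cone, and φ : ℝⁿ → ℝʳ continuously differentiable and K-convex. Fix λ̄ ∈ K* and let w̄ be the unique minimizer of w ↦ g(w) + ⟨λ̄, φ(w)⟩. Then for every w ∈ dom g and every λ ∈ K*: g(w) + ⟨λ, φ(w)⟩ ≥ g(w̄) + ⟨λ, φ(w̄)⟩ + (m/2)‖w − w̄‖² + ⟨Dφ(w̄)ᵀ(λ − λ̄), w − w̄⟩. -/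
open scoped RealInnerProductSpace
open Filter Topology

noncomputable section

lemma line_deriv' {n : ℕ} {E : Type*} [NormedAddCommGroup E] [NormedSpace ℝ E]
    (φ : Eu n → E) (hφ : ContDiff ℝ 1 φ) (x d : Eu n) :
    HasDerivAt (fun t : ℝ => φ (x + t • d)) (fderiv ℝ φ x d) 0 := by
  have h1 : HasDerivAt (fun t : ℝ => x + t • d) d 0 := by
    simpa using ((hasDerivAt_id (0:ℝ)).smul_const d).const_add x
  have h2 : HasFDerivAt φ (fderiv ℝ φ x) (x + (0:ℝ) • d) := by
    simpa using (hφ.differentiable one_ne_zero x).hasFDerivAt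
  exact h2.comp_hasDerivAt 0 h1

lemma slope_tendsto' {E : Type*} [NormedAddCommGroup E] [NormedSpace ℝ E]
    (f : ℝ → E) (L : E) (h : HasDerivAt f L 0) :
    Tendsto (fun t : ℝ => t⁻¹ • (f t - f 0)) (𝓝[>] (0:ℝ)) (𝓝 L) := by
  have h1 := hasDerivAt_iff_tendsto_slope.mp h
  have h2 : Tendsto (slope f 0) (𝓝[>] (0:ℝ)) (𝓝 L) :=
    h1.mono_left (nhdsWithin_mono 0 (fun t ht => ne_of_gt ht))
  have he : slope f 0 = fun t : ℝ => t⁻¹ • (f t - f 0) := by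
    funext t; rw [slope_def_module]; simp
  rwa [he] at h2

lemma comb_norm {n : ℕ} (x y : Eu n) (a b : ℝ) (h : a + b = 1) :
    a * ‖x‖^2 + b * ‖y‖^2 - ‖a•x + b•y‖^2 = a*b*‖x-y‖^2 := by
  have h1 : ‖a•x + b•y‖^2 = ‖a•x‖^2 + 2*(a*(b*⟪x,y⟫)) + ‖b•y‖^2 := by
    rw [norm_add_sq_real, real_inner_smul_left, real_inner_smul_right]
  have h2 : ‖x - y‖^2 = ‖x‖^2 - 2*⟪x,y⟫ + ‖y‖^2 := norm_sub_sq_real x y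
  have h3 : ‖a•x‖^2 = a^2 * ‖x‖^2 := by
    rw [norm_smul]; simp [mul_pow, sq_abs]
  have h4 : ‖b•y‖^2 = b^2 * ‖y‖^2 := by
    rw [norm_smul]; simp [mul_pow, sq_abs]
  have hb : b = 1 - a := by linarith
  subst hb
  rw [h1, h2, h3, h4]; ring

lemma kconvex_grad {n r : ℕ} {K : Set (Eu r)} (hK : IsClosedConvexCone K)
    {φ : Eu n → Eu r} (hφ : ContDiff ℝ 1 φ) (hφK : KConvexFn K φ) (x y : Eu n) :
    φ y - φ x - fderiv ℝ φ x (y - x) ∈ K := by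
  set d := y - x with hd
  set F : ℝ → Eu r := fun t => φ y - φ x - t⁻¹ • (φ (x + t • d) - φ x) with hF
  have htend : Tendsto F (𝓝[>] (0:ℝ)) (𝓝 (φ y - φ x - fderiv ℝ φ x d)) := by
    exact tendsto_const_nhds.sub (slope_tendsto' (fun t : ℝ => φ (x + t • d))
      (fderiv ℝ φ x d) (line_deriv' φ hφ x d) |>.congr (by intro t; simp))
  have hmem : ∀ᶠ t in 𝓝[>] (0:ℝ), F t ∈ K := by
    filter_upwards [Ioo_mem_nhdsGT_of_mem (Set.mem_Ico.mpr ⟨le_refl (0:ℝ), one_pos⟩)]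
      with t ht
    obtain ⟨ht0, ht1⟩ := ht
    have hk := hφK x y (1 - t) t (by linarith) ht0.le (by ring)
    have hpt : (1 - t) • x + t • y = x + t • d := by rw [hd]; module
    rw [hpt] at hk
    have hsc := hK.2.2 t⁻¹ (by positivity) _ hk
    have : t⁻¹ • ((1 - t) • φ x + t • φ y - φ (x + t • d)) = F t := by
      rw [hF]
      have htne : t ≠ 0 := ne_of_gt ht0
      match_scalars <;> (field_simp; try ring)
    rwa [this] at hsc
  exact hK.1.mem_of_tendsto htend hmem

/-- The key pointwise inequality: with `w̄` the unique minimizer of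
`w ↦ g(w) + ⟨λ̄, φ(w)⟩` for `λ̄ ∈ K*`, for every `w ∈ dom g` and `λ ∈ K*`,
`g(w) + ⟨λ, φ(w)⟩ ≥ g(w̄) + ⟨λ, φ(w̄)⟩ + (m/2)‖w − w̄‖² + ⟨Dφ(w̄)ᵀ(λ − λ̄), w − w̄⟩`. -/
theorem stmt9 {n r : ℕ} (m : ℝ) (hm : 0 < m) (g : Eu n → EReal)
    (hclosed : ClosedFn g) (hproper : ProperFn g) (hsc : StrongConvexFn m g)
    (K : Set (Eu r)) (hK : IsClosedConvexCone K)
    (φ : Eu n → Eu r) (hφ : ContDiff ℝ 1 φ) (hφK : KConvexFn K φ)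
    (lamb : Eu r) (hlamb : lamb ∈ dualConeSet K)
    (wb : Eu n)
    (hwb : IsUniqueMin (fun w => g w + ((⟪lamb, φ w⟫ : ℝ) : EReal)) wb) :
    ∀ w ∈ edom g, ∀ lam ∈ dualConeSet K,
      g wb + ((⟪lam, φ wb⟫ + m / 2 * ‖w - wb‖ ^ 2 +
          ⟪(ContinuousLinearMap.adjoint (fderiv ℝ φ wb)) (lam - lamb), w - wb⟫ : ℝ) : EReal)
        ≤ g w + ((⟪lam, φ w⟫ : ℝ) : EReal) := by
  intro w hw lam hlam
  have hbot := hproper.1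
  -- wb is in the domain of g
  have hwbdom : g wb < ⊤ := by
    obtain ⟨x0, hx0⟩ := hproper.2
    have hle : g wb + ((⟪lamb, φ wb⟫ : ℝ) : EReal) ≤ g x0 + ((⟪lamb, φ x0⟫ : ℝ) : EReal) := by
      by_cases hx : x0 = wb
      · subst hx; exact le_rfl
      · exact (hwb x0 hx).le
    by_contra hcon
    push_neg at hcon
    have htop : g wb = ⊤ := top_le_iff.mp hcon
    rw [htop, EReal.top_add_coe] at hle
    have hlt : g x0 + ((⟪lamb, φ x0⟫ : ℝ) : EReal) < ⊤ :=
      EReal.add_lt_top hx0.ne (EReal.coe_ne_top _)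
    exact absurd (top_le_iff.mp hle) hlt.ne
  have hgwb : g wb = (((g wb).toReal : ℝ) : EReal) :=
    (EReal.coe_toReal hwbdom.ne (hbot wb).ne').symm
  have hgw : g w = (((g w).toReal : ℝ) : EReal) :=
    (EReal.coe_toReal hw.ne (hbot w).ne').symm
  set gwbR := (g wb).toReal with hgwbR
  set gwR := (g w).toReal with hgwR
  set d := w - wb with hd
  set A := fderiv ℝ φ wb with hA
  set q : Eu n → ℝ := fun u => ⟪lamb, φ u⟫ with hq
  set p : ℝ → Eu n := fun t => wb + t • d with hp
  -- key real inequality for t ∈ (0,1)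
  have key : ∀ t ∈ Set.Ioo (0:ℝ) 1,
      gwbR ≤ gwR - m / 2 * (1 - t) * ‖d‖ ^ 2 + t⁻¹ * (q (p t) - q wb) := by
    intro t ht
    obtain ⟨ht0, ht1⟩ := ht
    have hcomb : (1 - t) • wb + t • w = p t := by rw [hp, hd]; module
    have hptdom : g (p t) < ⊤ := by
      have hseg : (1 - t) • wb + t • w ∈ edom g :=
        hsc.1 (Set.mem_setOf.mpr hwbdom) hw (by linarith) ht0.le (by ring)
      rwa [hcomb] at hseg
    have hgpt : g (p t) = (((g (p t)).toReal : ℝ) : EReal) :=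
      (EReal.coe_toReal hptdom.ne (hbot (p t)).ne').symm
    set gptR := (g (p t)).toReal with hgptR
    -- convexity of g - (m/2)‖·‖²
    have hcv := hsc.2 wb w (1 - t) t (by linarith) ht0.le (by ring)
    simp only [hcomb] at hcv
    rw [hgwb, hgw, hgpt, ← EReal.coe_sub, ← EReal.coe_sub, ← EReal.coe_sub,
      ← EReal.coe_mul, ← EReal.coe_mul, ← EReal.coe_add, EReal.coe_le_coe_iff] at hcv
    -- minimality of wb
    have hmin : g wb + ((q wb : ℝ) : EReal) ≤ g (p t) + ((q (p t) : ℝ) : EReal) := by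
      by_cases hx : p t = wb
      · rw [hx]
      · exact (hwb (p t) hx).le
    rw [hgwb, hgpt, ← EReal.coe_add, ← EReal.coe_add, EReal.coe_le_coe_iff] at hmin
    -- norm identity
    have hnorm := comb_norm wb w (1 - t) t (by ring)
    rw [hcomb] at hnorm
    have hnd : ‖wb - w‖ = ‖d‖ := by rw [norm_sub_rev, ← hd]
    rw [hnd] at hnorm
    have hE : m / 2 * ((1 - t) * ‖wb‖ ^ 2 + t * ‖w‖ ^ 2 - ‖p t‖ ^ 2)
        = m / 2 * ((1 - t) * t * ‖d‖ ^ 2) := by rw [hnorm]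
    -- combine
    have h5 : t * gwbR ≤ t * gwR - m / 2 * (t * (1 - t)) * ‖d‖ ^ 2 + (q (p t) - q wb) := by
      linarith [hcv, hmin, hE]
    have htne : t ≠ 0 := ne_of_gt ht0
    calc gwbR = t⁻¹ * (t * gwbR) := by field_simp
      _ ≤ t⁻¹ * (t * gwR - m / 2 * (t * (1 - t)) * ‖d‖ ^ 2 + (q (p t) - q wb)) :=
          mul_le_mul_of_nonneg_left h5 (by positivity)
      _ = gwR - m / 2 * (1 - t) * ‖d‖ ^ 2 + t⁻¹ * (q (p t) - q wb) := by
          field_simp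
  -- derivative of t ↦ q (p t)
  have hqd : HasDerivAt (fun t : ℝ => q (p t)) ⟪lamb, A d⟫ 0 := by
    have h1 := line_deriv' φ hφ wb d
    have h2 := (innerSL ℝ lamb).hasFDerivAt.comp_hasDerivAt 0 h1
    simpa [hq, hp, hA, innerSL_apply_apply, Function.comp_def] using h2
  -- limit of the right-hand side
  have htendR : Tendsto (fun t : ℝ => gwR - m / 2 * (1 - t) * ‖d‖ ^ 2 + t⁻¹ * (q (p t) - q wb))
      (𝓝[>] (0:ℝ)) (𝓝 (gwR - m / 2 * ‖d‖ ^ 2 + ⟪lamb, A d⟫)) := by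
    have ha : Tendsto (fun t : ℝ => gwR - m / 2 * (1 - t) * ‖d‖ ^ 2) (𝓝[>] (0:ℝ))
        (𝓝 (gwR - m / 2 * ‖d‖ ^ 2)) := by
      have hcont : Tendsto (fun t : ℝ => gwR - m / 2 * (1 - t) * ‖d‖ ^ 2) (𝓝 (0:ℝ))
          (𝓝 (gwR - m / 2 * (1 - 0) * ‖d‖ ^ 2)) := by
        exact tendsto_const_nhds.sub
          (((tendsto_const_nhds.sub tendsto_id).const_mul (m / 2)).mul_const (‖d‖ ^ 2))
      simpa using hcont.mono_left nhdsWithin_le_nhds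
    have hb : Tendsto (fun t : ℝ => t⁻¹ * (q (p t) - q wb)) (𝓝[>] (0:ℝ)) (𝓝 ⟪lamb, A d⟫) := by
      have := slope_tendsto' (fun t : ℝ => q (p t)) ⟪lamb, A d⟫ hqd
      have hp0 : q (p 0) = q wb := by simp [hp]
      simpa [hp0, smul_eq_mul] using this
    exact ha.add hb
  have hstar : gwbR ≤ gwR - m / 2 * ‖d‖ ^ 2 + ⟪lamb, A d⟫ := by
    apply ge_of_tendsto htendR
    filter_upwards [Ioo_mem_nhdsGT_of_mem (Set.mem_Ico.mpr ⟨le_refl (0:ℝ), one_pos⟩)]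
      with t ht using key t ht
  -- K-convexity gradient inequality with lam
  have hgrad : φ w - φ wb - A d ∈ K := by
    rw [hA, hd]; exact kconvex_grad hK hφ hφK wb w
  have hlam' : 0 ≤ ⟪lam, φ w - φ wb - A d⟫ := hlam _ hgrad
  rw [inner_sub_right, inner_sub_right] at hlam'
  -- finish
  rw [hgwb, hgw, ← EReal.coe_add, ← EReal.coe_add, EReal.coe_le_coe_iff]
  have hadj : ⟪(ContinuousLinearMap.adjoint A) (lam - lamb), d⟫ = ⟪lam, A d⟫ - ⟪lamb, A d⟫ := by
    rw [ContinuousLinearMap.adjoint_inner_left, inner_sub_left]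
  rw [hadj]
  linarith
end
end

section
/- Let g : ℝⁿ → ℝ ∪ {∞} be closed, proper, m-strongly convex (m > 0) and subdifferentiable at every point of its domain; let K ⊂ ℝʳ be a closed convex cone and φ : ℝⁿ → ℝʳ continuously differentiable and K-convex satisfying: (i) φ(w¹) ≼_K φ(w²) implies w¹ = w², and (ii) for every w⋄ ∈ dom g there exists λ⋄ ∈ K* with −Dφ(w⋄)ᵀλ⋄ ∈ ∂g(w⋄). Fix w⋆ ∈ dom g, let λ⋆ ∈ K* satisfy −Dφ(w⋆)ᵀλ⋆ ∈ ∂g(w⋆) (so w*(λ⋆) = w⋆, i.e. λ⋆ is an optimal incentive), and set t̃g*(λ) := ḡ*(λ) − ⟨λ, φ(w⋆)⟩. Then for every λ ∈ K*: −t̃g*(λ⋆) ≤ −t̃g*(λ) ≤ −t̃g*(λ⋆) + (1/(2m)) ‖Dφ(w⋆)ᵀ(λ − λ⋆)‖². In particular, λ⋆ minimizes −t̃g* over K*. -/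
open scoped RealInnerProductSpace
open Filter Topology

noncomputable section

lemma amgm_aux {n : ℕ} (u v : EuclideanSpace ℝ (Fin n)) (m : ℝ) (hm : 0 < m) :
    -(1/(2*m) * ‖v‖^2) ≤ ⟪v, u⟫ + m/2 * ‖u‖^2 := by
  have h := norm_add_sq_real u (m⁻¹ • v)
  rw [inner_smul_right, norm_smul, real_inner_comm v u,
    Real.norm_eq_abs, abs_of_pos (show (0:ℝ) < m⁻¹ by positivity)] at h
  have h2 : 0 ≤ ‖u + m⁻¹ • v‖^2 := by positivity
  rw [h] at h2
  have h2' := mul_nonneg hm.le h2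
  have h7 : m * (‖u‖^2 + 2*(m⁻¹*⟪v,u⟫) + (m⁻¹*‖v‖)^2)
      = m*‖u‖^2 + 2*⟪v,u⟫ + m⁻¹*‖v‖^2 := by field_simp
  rw [h7] at h2'
  have h6 : 1/(2*m) = m⁻¹/2 := by field_simp
  rw [h6]; linarith

lemma grad_ineq {n r : ℕ} (K : Set (Eu r)) (φ : Eu n → Eu r) (hφ : ContDiff ℝ 1 φ)
    (hφK : KConvexFn K φ) (μ : Eu r) (hμ : μ ∈ dualConeSet K) (wst z : Eu n) :
    ⟪(ContinuousLinearMap.adjoint (fderiv ℝ φ wst)) μ, z - wst⟫ + ⟪μ, φ wst⟫ ≤ ⟪μ, φ z⟫ := by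
  have hDiff : Differentiable ℝ φ := hφ.differentiable one_ne_zero
  set ψ : Eu n → ℝ := fun x => ⟪μ, φ x⟫ with hψdef
  have hψconv : ConvexOn ℝ Set.univ ψ := by
    refine ⟨convex_univ, fun x _ y _ a b ha hb hab => ?_⟩
    have h0 := hμ _ (hφK x y a b ha hb hab)
    simp only [inner_sub_right, inner_add_right, real_inner_smul_right] at h0
    simp only [hψdef, smul_eq_mul]
    linarith
  set q : ℝ → ℝ := fun t => ψ (AffineMap.lineMap wst z t) with hqdef
  have hqconv : ConvexOn ℝ Set.univ q := by
    have := hψconv.comp_affineMap (AffineMap.lineMap wst z : ℝ →ᵃ[ℝ] Eu n)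
    exact this
  have hline : HasDerivAt (fun t : ℝ => (AffineMap.lineMap wst z : ℝ →ᵃ[ℝ] Eu n) t)
      (z - wst) 0 := by
    simp only [AffineMap.coe_lineMap]
    simpa using ((hasDerivAt_id (0:ℝ)).smul_const (z - wst)).add_const wst
  have hφd : HasFDerivAt φ (fderiv ℝ φ wst) ((AffineMap.lineMap wst z : ℝ →ᵃ[ℝ] Eu n) 0) := by
    rw [AffineMap.lineMap_apply_zero]
    exact (hDiff wst).hasFDerivAt
  have hcomp : HasDerivAt (fun t : ℝ => φ ((AffineMap.lineMap wst z : ℝ →ᵃ[ℝ] Eu n) t))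
      ((fderiv ℝ φ wst) (z - wst)) 0 := hφd.comp_hasDerivAt 0 hline
  have hq : HasDerivAt q ⟪μ, (fderiv ℝ φ wst) (z - wst)⟫ 0 := by
    have := (innerSL ℝ μ).hasFDerivAt.comp_hasDerivAt 0 hcomp
    exact this
  have hslope := hqconv.le_slope_of_hasDerivAt (Set.mem_univ (0:ℝ)) (Set.mem_univ (1:ℝ))
    zero_lt_one hq
  rw [slope_def_field] at hslope
  simp only [hqdef, hψdef, AffineMap.lineMap_apply_zero, AffineMap.lineMap_apply_one,
    sub_zero, div_one] at hslope
  rw [ContinuousLinearMap.adjoint_inner_left]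
  linarith

lemma strong_sub {n : ℕ} (m : ℝ) (hm : 0 < m) (g : Eu n → EReal)
    (hbot : ∀ x, ⊥ < g x)
    (hconv : ConvexFn (fun x => g x - ((m / 2 * ‖x‖ ^ 2 : ℝ) : EReal)))
    (wst : Eu n) (s : Eu n) (hs : ∀ z, g wst + ((⟪s, z - wst⟫ : ℝ) : EReal) ≤ g z)
    (G : ℝ) (hG : g wst = (G : EReal)) (z : Eu n) (Z : ℝ) (hZ : g z = (Z : EReal)) :
    G + ⟪s, z - wst⟫ + m / 2 * ‖z - wst‖ ^ 2 ≤ Z := by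
  set u := z - wst with hu
  have hzz : z = wst + u := by rw [hu]; abel
  have hfix : ∀ t : ℝ, 0 < t → t < 1 → ⟪s, u⟫ + m / 2 * (1 - t) * ‖u‖ ^ 2 ≤ Z - G := by
    intro t ht0 ht1
    have ha : (0:ℝ) ≤ 1 - t := by linarith
    have hb : (0:ℝ) ≤ t := ht0.le
    have hab : (1 - t) + t = 1 := by ring
    have hcvx := hconv wst z (1 - t) t ha hb hab
    simp only at hcvx
    have hwt : (1 - t) • wst + t • z = wst + t • u := by
      rw [hzz]; module
    rw [hwt, hG, hZ] at hcvx
    -- rewrite the RHS into a single real coercion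
    have hrhs : ((1 - t : ℝ) : EReal) * ((G : EReal) - ((m / 2 * ‖wst‖ ^ 2 : ℝ) : EReal))
        + ((t : ℝ) : EReal) * ((Z : EReal) - ((m / 2 * ‖z‖ ^ 2 : ℝ) : EReal))
        = (((1 - t) * (G - m / 2 * ‖wst‖ ^ 2) + t * (Z - m / 2 * ‖z‖ ^ 2) : ℝ) : EReal) := by
      push_cast
      rfl
    rw [hrhs] at hcvx
    -- g (wst + t•u) is finite
    have htop : g (wst + t • u) ≠ ⊤ := by
      intro htop
      rw [htop, EReal.top_sub_coe] at hcvx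
      exact (EReal.coe_lt_top _).not_ge hcvx
    have hbot' : g (wst + t • u) ≠ ⊥ := (hbot _).ne'
    set Gt : ℝ := (g (wst + t • u)).toReal with hGt
    have hGt' : g (wst + t • u) = (Gt : EReal) := (EReal.coe_toReal htop hbot').symm
    rw [hGt'] at hcvx
    rw [show ((Gt : EReal) - ((m / 2 * ‖wst + t • u‖ ^ 2 : ℝ) : EReal))
        = ((Gt - m / 2 * ‖wst + t • u‖ ^ 2 : ℝ) : EReal) from by push_cast; rfl] at hcvx
    have hcvxR : Gt - m / 2 * ‖wst + t • u‖ ^ 2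
        ≤ (1 - t) * (G - m / 2 * ‖wst‖ ^ 2) + t * (Z - m / 2 * ‖z‖ ^ 2) :=
      EReal.coe_le_coe_iff.mp hcvx
    -- subgradient at w_t
    have hsub := hs (wst + t • u)
    rw [hG, hGt', show wst + t • u - wst = t • u from by abel,
      real_inner_smul_right] at hsub
    have hsubR : G + t * ⟪s, u⟫ ≤ Gt := by
      have : ((G + t * ⟪s, u⟫ : ℝ) : EReal) ≤ (Gt : EReal) := by
        rw [EReal.coe_add] at *
        exact hsub
      exact_mod_cast this
    -- norm expansions
    have e1 : ‖wst + t • u‖ ^ 2 = ‖wst‖ ^ 2 + 2 * (t * ⟪wst, u⟫) + t ^ 2 * ‖u‖ ^ 2 := by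
      rw [norm_add_sq_real, inner_smul_right, norm_smul, Real.norm_eq_abs,
        abs_of_pos ht0, mul_pow]
    have e2 : ‖z‖ ^ 2 = ‖wst‖ ^ 2 + 2 * ⟪wst, u⟫ + ‖u‖ ^ 2 := by
      rw [hzz, norm_add_sq_real]
    have key : t * (⟪s, u⟫ + m / 2 * (1 - t) * ‖u‖ ^ 2) ≤ t * (Z - G) := by
      rw [e1, e2] at hcvxR
      nlinarith [hcvxR, hsubR]
    exact (mul_le_mul_iff_right₀ ht0).mp key
  -- limit t → 0
  have hc : 0 ≤ m / 2 * ‖u‖ ^ 2 := by positivity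
  have hfinal : ⟪s, u⟫ + m / 2 * ‖u‖ ^ 2 ≤ Z - G := by
    refine le_of_forall_pos_le_add fun ε hε => ?_
    set c := m / 2 * ‖u‖ ^ 2 with hcdef
    set t := min (ε / (c + 1)) (1/2) with htdef
    have ht0 : 0 < t := lt_min (by positivity) (by norm_num)
    have ht1 : t < 1 := lt_of_le_of_lt (min_le_right _ _) (by norm_num)
    have h := hfix t ht0 ht1
    have hct : c * t ≤ ε := by
      have h1 : t ≤ ε / (c + 1) := min_le_left _ _
      have h2 : (c + 1) * t ≤ ε := by
        calc (c+1) * t ≤ (c+1) * (ε / (c+1)) :=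
              mul_le_mul_of_nonneg_left h1 (by linarith)
          _ = ε := by field_simp
      nlinarith
    nlinarith
  linarith

/-- For an optimal incentive `λ⋆` (i.e. `−Dφ(w⋆)ᵀλ⋆ ∈ ∂g(w⋆)`), and
`t̃g*(λ) := ḡ*(λ) − ⟨λ, φ(w⋆)⟩`, we have for all `λ ∈ K*`:
`−t̃g*(λ⋆) ≤ −t̃g*(λ) ≤ −t̃g*(λ⋆) + (1/(2m)) ‖Dφ(w⋆)ᵀ(λ − λ⋆)‖²`; in particular `λ⋆`
minimizes `−t̃g*` over `K*`. -/
theorem stmt10 {n r : ℕ} (m : ℝ) (hm : 0 < m) (g : Eu n → EReal)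
    (hclosed : ClosedFn g) (hproper : ProperFn g) (hsc : StrongConvexFn m g)
    (hsub : ∀ x ∈ edom g, (subdiff g x).Nonempty)
    (K : Set (Eu r)) (hK : IsClosedConvexCone K)
    (φ : Eu n → Eu r) (hφ : ContDiff ℝ 1 φ) (hφK : KConvexFn K φ)
    (hinj : ∀ w1 w2 : Eu n, φ w2 - φ w1 ∈ K → w1 = w2)
    (hctrl : ∀ w0 ∈ edom g, ∃ lam0 ∈ dualConeSet K,
      -(ContinuousLinearMap.adjoint (fderiv ℝ φ w0)) lam0 ∈ subdiff g w0)
    (wst : Eu n) (hwst : wst ∈ edom g)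
    (lamst : Eu r) (hlamst : lamst ∈ dualConeSet K)
    (hopt : -(ContinuousLinearMap.adjoint (fderiv ℝ φ wst)) lamst ∈ subdiff g wst) :
    ∀ lam ∈ dualConeSet K,
      (-(dualFn g φ lamst) + ((⟪lamst, φ wst⟫ : ℝ) : EReal)
          ≤ -(dualFn g φ lam) + ((⟪lam, φ wst⟫ : ℝ) : EReal)) ∧
      (-(dualFn g φ lam) + ((⟪lam, φ wst⟫ : ℝ) : EReal)
          ≤ -(dualFn g φ lamst) + ((⟪lamst, φ wst⟫ : ℝ) : EReal) +
            ((1 / (2 * m) *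
              ‖(ContinuousLinearMap.adjoint (fderiv ℝ φ wst)) (lam - lamst)‖ ^ 2 : ℝ) : EReal)) := by
  intro lam hlam
  have hbot := hproper.1
  have hsgrad : ∀ z, g wst + ((⟪-(ContinuousLinearMap.adjoint (fderiv ℝ φ wst)) lamst,
      z - wst⟫ : ℝ) : EReal) ≤ g z := hopt
  have hwst' : g wst < ⊤ := hwst
  set G := (g wst).toReal with hGdef
  have hG : g wst = (G : EReal) := (EReal.coe_toReal hwst'.ne (hbot wst).ne').symm
  set A := ContinuousLinearMap.adjoint (fderiv ℝ φ wst) with hA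
  set cst : ℝ := ⟪lamst, φ wst⟫ with hcst
  set c : ℝ := ⟪lam, φ wst⟫ with hc
  have key1 := grad_ineq K φ hφ hφK
  -- upper bound for dualFn at any μ : dualFn ≤ value at wst
  have hub : ∀ μ : Eu r, dualFn g φ μ ≤ (G : EReal) + ((⟪μ, φ wst⟫ : ℝ) : EReal) := by
    intro μ
    have := iInf_le (fun w : Eu n => g w + ((⟪μ, φ w⟫ : ℝ) : EReal)) wst
    rw [hG] at this
    exact this
  -- dualFn lamst ≥ G + cst
  have hdst_ge : ((G + cst : ℝ) : EReal) ≤ dualFn g φ lamst := by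
    refine le_iInf fun w => ?_
    by_cases hw : g w = ⊤
    · rw [hw, EReal.top_add_coe]; exact le_top
    · set W := (g w).toReal with hWdef
      have hW : g w = (W : EReal) := (EReal.coe_toReal hw (hbot w).ne').symm
      have h1 := key1 lamst hlamst wst w
      have h2 : G + ⟪-(A lamst), w - wst⟫ ≤ W := by
        have h3 := hsgrad w
        rw [hG, hW, ← EReal.coe_add, EReal.coe_le_coe_iff] at h3
        exact h3
      rw [inner_neg_left] at h2
      rw [hW, ← EReal.coe_add, EReal.coe_le_coe_iff]
      linarith
  have hdst : dualFn g φ lamst = ((G + cst : ℝ) : EReal) := by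
    refine le_antisymm ?_ hdst_ge
    rw [EReal.coe_add]
    exact hub lamst
  have hneg_dst : -(dualFn g φ lamst) + (cst : EReal) = ((-G : ℝ) : EReal) := by
    rw [hdst, ← EReal.coe_neg, ← EReal.coe_add]
    norm_num
  constructor
  · rw [hneg_dst]
    have h4 : -((G : EReal) + ((c : ℝ) : EReal)) ≤ -(dualFn g φ lam) :=
      EReal.neg_le_neg_iff.mpr (hub lam)
    have h5 := add_le_add_left h4 ((c : ℝ) : EReal)
    refine le_trans (le_of_eq ?_) h5
    rw [← EReal.coe_add, ← EReal.coe_neg, ← EReal.coe_add]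
    norm_num
  · set v := A (lam - lamst) with hv
    set Q : ℝ := 1 / (2 * m) * ‖v‖ ^ 2 with hQ
    have hd_ge : ((G + c - Q : ℝ) : EReal) ≤ dualFn g φ lam := by
      refine le_iInf fun w => ?_
      by_cases hw : g w = ⊤
      · rw [hw, EReal.top_add_coe]; exact le_top
      · set W := (g w).toReal with hWdef
        have hW : g w = (W : EReal) := (EReal.coe_toReal hw (hbot w).ne').symm
        have h1 := key1 lam hlam wst w
        have h2 := strong_sub m hm g hbot hsc.2 wst (-(A lamst)) hsgrad G hG w W hW
        rw [inner_neg_left] at h2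
        have h3 := amgm_aux (w - wst) v m hm
        have h4 : ⟪v, w - wst⟫ = ⟪A lam, w - wst⟫ - ⟪A lamst, w - wst⟫ := by
          rw [hv, map_sub, inner_sub_left]
        rw [hW, ← EReal.coe_add, EReal.coe_le_coe_iff]
        rw [h4] at h3
        rw [hQ]
        linarith
    have h4 : -(dualFn g φ lam) ≤ -((G + c - Q : ℝ) : EReal) :=
      EReal.neg_le_neg_iff.mpr hd_ge
    have h5 := add_le_add_left h4 ((c : ℝ) : EReal)
    refine le_trans h5 (le_of_eq ?_)
    rw [hneg_dst, ← EReal.coe_neg, ← EReal.coe_add, ← EReal.coe_add]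
    norm_cast
    ring
end
end

section
/- Let g : ℝⁿ → ℝ ∪ {∞} be closed, proper, m-strongly convex (m > 0) and subdifferentiable at every point of its domain; let K ⊂ ℝʳ be a closed convex cone and φ : ℝⁿ → ℝʳ continuously differentiable and K-convex satisfying: (i) φ(w¹) ≼_K φ(w²) implies w¹ = w², and (ii) for every w⋄ ∈ dom g there exists λ⋄ ∈ K* with −Dφ(w⋄)ᵀλ⋄ ∈ ∂g(w⋄). Fix w⋆ ∈ dom g and let λ⋆ ∈ K* be an optimal incentive, i.e. w⋆ is the unique minimizer of w ↦ g(w) + ⟨λ⋆, φ(w)⟩. If λ̄ ∈ K* satisfies Dφ(w⋆)ᵀ(λ̄ − λ⋆) = 0, then λ̄ is also an optimal incentive, i.e. w⋆ is the unique minimizer of w ↦ g(w) + ⟨λ̄, φ(w)⟩. -/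
open scoped RealInnerProductSpace
open Filter Topology

noncomputable section

/-- First-order linearization of a `K`-convex `C¹` map: the linearization error lies in `K`. -/
lemma kconv_lin {n r : ℕ} {K : Set (Eu r)} (hK : IsClosedConvexCone K)
    {φ : Eu n → Eu r} (hφ : ContDiff ℝ 1 φ) (hφK : KConvexFn K φ) (x z : Eu n) :
    φ z - φ x - (fderiv ℝ φ x) (z - x) ∈ K := by
  have hmem : ∀ t ∈ Set.Ioo (0:ℝ) 1,
      (φ z - φ x) - t⁻¹ • (φ (x + t • (z - x)) - φ x) ∈ K := by
    intro t ht
    have h1 := hφK z x t (1-t) ht.1.le (by linarith [ht.2]) (by ring)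
    have ht0 : t ≠ 0 := ht.1.ne'
    have h2 := hK.2.2 t⁻¹ (inv_nonneg.mpr ht.1.le) _ h1
    have e1 : x + t • (z - x) = t • z + (1-t) • x := by module
    rw [e1]
    have e2 : t⁻¹ • (t • φ z + (1 - t) • φ x - φ (t • z + (1-t) • x))
        = (φ z - φ x) - t⁻¹ • (φ (t • z + (1-t) • x) - φ x) := by
      match_scalars <;> (field_simp; try ring)
    rwa [e2] at h2
  have hslope : Tendsto (fun (t:ℝ) => t⁻¹ • (φ (x + t • (z - x)) - φ x)) (𝓝[>] 0)
      (𝓝 ((fderiv ℝ φ x) (z - x))) :=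
    (((hφ.differentiable one_ne_zero) x).hasFDerivAt.hasLineDerivAt (z - x)).tendsto_slope_zero_right
  have htend : Tendsto (fun (t:ℝ) => (φ z - φ x) - t⁻¹ • (φ (x + t • (z - x)) - φ x)) (𝓝[>] 0)
      (𝓝 ((φ z - φ x) - (fderiv ℝ φ x) (z - x))) := tendsto_const_nhds.sub hslope
  exact hK.1.mem_of_tendsto htend
    (Filter.eventually_of_mem (Ioo_mem_nhdsGT_of_mem ⟨le_refl 0, one_pos⟩) hmem)

/-- If `λ⋆ ∈ K*` is an optimal incentive for `w⋆` (i.e. `w⋆` is the unique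
minimizer of `w ↦ g(w) + ⟨λ⋆, φ(w)⟩`) and `λ̄ ∈ K*` satisfies `Dφ(w⋆)ᵀ(λ̄ − λ⋆) = 0`, then `λ̄`
is also an optimal incentive: `w⋆` is the unique minimizer of `w ↦ g(w) + ⟨λ̄, φ(w)⟩`. -/
theorem stmt11 {n r : ℕ} (m : ℝ) (hm : 0 < m) (g : Eu n → EReal)
    (hclosed : ClosedFn g) (hproper : ProperFn g) (hsc : StrongConvexFn m g)
    (hsub : ∀ x ∈ edom g, (subdiff g x).Nonempty)
    (K : Set (Eu r)) (hK : IsClosedConvexCone K)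
    (φ : Eu n → Eu r) (hφ : ContDiff ℝ 1 φ) (hφK : KConvexFn K φ)
    (hinj : ∀ w1 w2 : Eu n, φ w2 - φ w1 ∈ K → w1 = w2)
    (hctrl : ∀ w0 ∈ edom g, ∃ lam0 ∈ dualConeSet K,
      -(ContinuousLinearMap.adjoint (fderiv ℝ φ w0)) lam0 ∈ subdiff g w0)
    (wst : Eu n) (hwst : wst ∈ edom g)
    (lamst : Eu r) (hlamst : lamst ∈ dualConeSet K)
    (hopt : IsUniqueMin (fun w => g w + ((⟪lamst, φ w⟫ : ℝ) : EReal)) wst)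
    (lamb : Eu r) (hlamb : lamb ∈ dualConeSet K)
    (hzero : (ContinuousLinearMap.adjoint (fderiv ℝ φ wst)) (lamb - lamst) = 0) :
    IsUniqueMin (fun w => g w + ((⟪lamb, φ w⟫ : ℝ) : EReal)) wst := by
  have hgbot := hproper.1
  have hval : ∀ x ∈ edom g, g x = (((g x).toReal : ℝ) : EReal) := fun x hx =>
    (EReal.coe_toReal hx.ne (hgbot x).ne').symm
  set gw := (g wst).toReal with hgw
  have hgww : g wst = (gw : EReal) := hval wst hwst
  set D := fderiv ℝ φ wst with hD
  -- the two multipliers agree on the range of D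
  have hDd : ∀ v : Eu n, ⟪lamb, D v⟫ = ⟪lamst, D v⟫ := by
    intro v
    have h0 : ⟪(ContinuousLinearMap.adjoint D) (lamb - lamst), v⟫ = 0 := by
      rw [hzero]; simp
    rw [ContinuousLinearMap.adjoint_inner_left, inner_sub_left] at h0
    linarith
  -- key strong subgradient inequality at wst
  have key : ∀ z, z ∈ edom g → z ≠ wst →
      gw + m/2*‖z - wst‖^2 - ⟪lamst, D (z - wst)⟫ ≤ (g z).toReal := by
    intro z hz hzw
    have main : ∀ t ∈ Set.Ioo (0:ℝ) 1,
        gw ≤ (g z).toReal - m/2*((1-t)*‖z - wst‖^2)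
          + t⁻¹ * ⟪lamst, φ (wst + t • (z - wst)) - φ wst⟫ := by
      intro t ht
      have hxtdom : t • z + (1-t) • wst ∈ edom g :=
        hsc.1 hz hwst ht.1.le (by linarith [ht.2]) (by ring)
      have hconv := hsc.2 z wst t (1-t) ht.1.le (by linarith [ht.2]) (by ring)
      simp only at hconv
      rw [hval z hz, hval wst hwst, hval _ hxtdom] at hconv
      norm_cast at hconv
      -- minimality
      have hne : t • z + (1-t) • wst ≠ wst := by
        intro h
        have h2 : t • (z - wst) = (0 : Eu n) := by
          have e : t • z + (1-t) • wst - wst = t • (z - wst) := by module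
          rw [h] at e; rw [← e, sub_self]
        rcases smul_eq_zero.mp h2 with h3 | h3
        · exact ht.1.ne' h3
        · exact hzw (sub_eq_zero.mp h3)
      have hmin := (hopt _ hne).le
      simp only at hmin
      rw [hval _ hxtdom, hgww] at hmin
      norm_cast at hmin
      -- norm identity
      have hid : t*‖z‖^2 + (1-t)*‖wst‖^2 - ‖t • z + (1-t) • wst‖^2
          = t*(1-t)*‖z - wst‖^2 := by
        simp only [← real_inner_self_eq_norm_sq, inner_sub_sub_self, inner_add_add_self,
          real_inner_smul_left, real_inner_smul_right]
        ring
      have hpt : wst + t • (z - wst) = t • z + (1-t) • wst := by module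
      rw [hpt, inner_sub_right]
      have ht0 : (0:ℝ) < t := ht.1
      rw [← mul_le_mul_iff_right₀ ht0]
      have hinv : t * (t⁻¹ * (⟪lamst, φ (t • z + (1-t) • wst)⟫ - ⟪lamst, φ wst⟫))
          = ⟪lamst, φ (t • z + (1-t) • wst)⟫ - ⟪lamst, φ wst⟫ := by
        field_simp
      rw [mul_add, hinv]
      nlinarith [hconv, hmin, hid]
    -- pass to the limit t → 0⁺
    have hslope : Tendsto (fun (t:ℝ) => t⁻¹ • (φ (wst + t • (z - wst)) - φ wst)) (𝓝[>] 0)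
        (𝓝 (D (z - wst))) :=
      (((hφ.differentiable one_ne_zero) wst).hasFDerivAt.hasLineDerivAt (z - wst)).tendsto_slope_zero_right
    have h2 : Tendsto (fun (t:ℝ) => t⁻¹ * ⟪lamst, φ (wst + t • (z - wst)) - φ wst⟫) (𝓝[>] 0)
        (𝓝 (⟪lamst, D (z - wst)⟫)) := by
      have h3 := Tendsto.inner (𝕜 := ℝ) (tendsto_const_nhds (x := lamst) (f := 𝓝[>] (0:ℝ))) hslope
      have heq : (fun t:ℝ => t⁻¹ * ⟪lamst, φ (wst + t • (z - wst)) - φ wst⟫)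
          = fun t:ℝ => ⟪lamst, t⁻¹ • (φ (wst + t • (z - wst)) - φ wst)⟫ := by
        funext t; rw [real_inner_smul_right]
      rw [heq]; exact h3
    have h1 : Tendsto (fun (t:ℝ) => (g z).toReal - m/2*((1-t)*‖z - wst‖^2)) (𝓝[>] 0)
        (𝓝 ((g z).toReal - m/2*‖z - wst‖^2)) := by
      have hc : ContinuousAt (fun (t:ℝ) => (g z).toReal - m/2*((1-t)*‖z - wst‖^2)) 0 := by
        fun_prop
      have := hc.tendsto.mono_left (nhdsWithin_le_nhds (s := Set.Ioi (0:ℝ)))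
      simp only [sub_zero, one_mul] at this
      exact this
    have hlim := ge_of_tendsto (h1.add h2)
      (Eventually.mono (Ioo_mem_nhdsGT_of_mem ⟨le_refl 0, one_pos⟩) main)
    linarith [hlim]
  -- conclude
  intro z hzw
  simp only
  by_cases hz : z ∈ edom g
  · rw [hval z hz, hgww]
    norm_cast
    have A := key z hz hzw
    have B : 0 ≤ ⟪lamb, φ z - φ wst - D (z - wst)⟫ :=
      hlamb _ (kconv_lin hK hφ hφK wst z)
    rw [inner_sub_right, inner_sub_right] at B
    have C := hDd (z - wst)
    have hN : 0 < ‖z - wst‖ := by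
      rw [norm_pos_iff]; exact sub_ne_zero.mpr hzw
    nlinarith [pow_pos hN 2]
  · have hztop : g z = ⊤ := top_le_iff.mp (not_lt.mp hz)
    rw [hztop, hgww, EReal.top_add_coe, ← EReal.coe_add]
    exact EReal.coe_lt_top _
end
end

section
/- Let g : ℝⁿ → ℝ ∪ {∞} be closed, proper, and m-strongly convex (m > 0), K ⊂ ℝʳ a closed convex cone, and φ : ℝⁿ → ℝʳ continuously differentiable and K-convex. Fix w⋆ ∈ dom g and set t̃g*(λ) := ḡ*(λ) − ⟨λ, φ(w⋆)⟩ and, for λ̄ ∈ K*, t̃g*(λ; λ̄) := ḡ*(λ̄) + ⟨λ − λ̄, φ(w*(λ̄))⟩ − (1/(2m))‖Dφ(w*(λ̄))ᵀ(λ − λ̄)‖² − ⟨λ, φ(w⋆)⟩. If λ⁽ᵏ⁾ ∈ K*, ε⁽ᵏ⁾ > 0, and λ⁽ᵏ⁺¹⁾ minimizes λ ↦ ε⁽ᵏ⁾‖λ − λ⁽ᵏ⁾‖² − t̃g*(λ; λ⁽ᵏ⁾) over K*, then the dual cost decrease bound holds: t̃g*(λ⁽ᵏ⁾) − t̃g*(λ⁽ᵏ⁺¹⁾)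 ≤ −t̃g*(λ⁽ᵏ⁺¹⁾; λ⁽ᵏ⁾) + t̃g*(λ⁽ᵏ⁾; λ⁽ᵏ⁾) + ε⁽ᵏ⁾‖λ⁽ᵏ⁺¹⁾ − λ⁽ᵏ⁾‖². -/
open scoped RealInnerProductSpace
open Filter Topology

noncomputable section

/-- The quadratic surrogate
`t̃g*(λ; λ̄) = ḡ*(λ̄) + ⟨λ − λ̄, φ(w̄)⟩ − (1/(2m))‖Dφ(w̄)ᵀ(λ − λ̄)‖² − ⟨λ, φ(w⋆)⟩`,
where `w̄ = w*(λ̄)` (it is real-valued since `ḡ*` is finite on `K*`). -/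
def tsur {n r : ℕ} (g : Eu n → EReal) (φ : Eu n → Eu r) (m : ℝ) (wT : Eu n)
    (lamb : Eu r) (wb : Eu n) (lam : Eu r) : ℝ :=
  (dualFn g φ lamb).toReal + ⟪lam - lamb, φ wb⟫
    - 1 / (2 * m) * ‖(ContinuousLinearMap.adjoint (fderiv ℝ φ wb)) (lam - lamb)‖ ^ 2
    - ⟪lam, φ wT⟫

/-- The shifted dual function `t̃g*(λ) = ḡ*(λ) − ⟨λ, φ(w⋆)⟩` (real-valued on `K*`). -/
def tgR {n r : ℕ} (g : Eu n → EReal) (φ : Eu n → Eu r) (wT : Eu n) (lam : Eu r) : ℝ :=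
  (dualFn g φ lam).toReal - ⟪lam, φ wT⟫

lemma aux_kconv_inner {n r : ℕ} {K : Set (Eu r)} {φ : Eu n → Eu r} {lam : Eu r}
    (hlam : lam ∈ dualConeSet K) (hφK : KConvexFn K φ) :
    ConvexOn ℝ Set.univ (fun x => (⟪lam, φ x⟫ : ℝ)) := by
  refine ⟨convex_univ, fun x _ y _ a b ha hb hab => ?_⟩
  have h := hlam _ (hφK x y a b ha hb hab)
  rw [inner_sub_right, inner_add_right, real_inner_smul_right, real_inner_smul_right] at h
  simp only [smul_eq_mul]
  linarith

lemma aux_slope_tendsto {n : ℕ} (ψ : Eu n → ℝ) (x v : Eu n)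
    (hd : DifferentiableAt ℝ ψ x) :
    Tendsto (fun t : ℝ => (ψ (x + t • v) - ψ x) / t) (𝓝[>] (0:ℝ))
      (𝓝 (fderiv ℝ ψ x v)) := by
  have hline : HasDerivAt (fun t : ℝ => x + t • v) v 0 := by
    simpa using ((hasDerivAt_id (0:ℝ)).smul_const v).const_add x
  have hf : HasDerivAt (fun t : ℝ => ψ (x + t • v)) (fderiv ℝ ψ x v) 0 := by
    have hx : HasFDerivAt ψ (fderiv ℝ ψ x) (x + (0:ℝ) • v) := by
      simpa using hd.hasFDerivAt
    exact hx.comp_hasDerivAt 0 hline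
  have h1 := hasDerivAt_iff_tendsto_slope.mp hf
  have h2 : (𝓝[>] (0:ℝ)) ≤ 𝓝[≠] (0:ℝ) :=
    nhdsWithin_mono 0 (fun t ht => ne_of_gt ht)
  have h3 := h1.mono_left h2
  refine h3.congr (fun t => ?_)
  simp [slope_def_field]

lemma aux_tangent_le {n : ℕ} (ψ : Eu n → ℝ) (x y : Eu n)
    (hconv : ConvexOn ℝ Set.univ ψ) (hd : DifferentiableAt ℝ ψ x) :
    fderiv ℝ ψ x (y - x) ≤ ψ y - ψ x := by
  refine le_of_tendsto (aux_slope_tendsto ψ x (y - x) hd) ?_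
  filter_upwards [Ioo_mem_nhdsGT_of_mem (Set.mem_Ico.mpr ⟨le_refl (0:ℝ), one_pos⟩)]
    with t ht
  have hcx : ψ ((1 - t) • x + t • y) ≤ (1 - t) * ψ x + t * ψ y := by
    have := hconv.2 (Set.mem_univ x) (Set.mem_univ y)
      (by linarith [ht.2] : (0:ℝ) ≤ 1 - t) ht.1.le (by ring)
    simpa using this
  have hpt : x + t • (y - x) = (1 - t) • x + t • y := by
    rw [smul_sub, sub_smul, one_smul]; abel
  rw [hpt, div_le_iff₀ ht.1]
  nlinarith [ht.1]

lemma aux_norm_combo {n : ℕ} (a b : Eu n) (t : ℝ) :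
    (1 - t) * ‖a‖ ^ 2 + t * ‖b‖ ^ 2 - ‖(1 - t) • a + t • b‖ ^ 2
      = t * (1 - t) * ‖b - a‖ ^ 2 := by
  have h1 : ‖(1 - t) • a + t • b‖ ^ 2
      = ‖(1-t)•a‖^2 + 2 * ⟪(1-t)•a, t•b⟫ + ‖t•b‖^2 := norm_add_sq_real _ _
  have h2 : ‖b - a‖ ^ 2 = ‖b‖^2 - 2 * ⟪b, a⟫ + ‖a‖^2 := norm_sub_sq_real b a
  have h3 : ⟪(1-t)•a, t•b⟫ = (1-t) * (t * ⟪a, b⟫) := by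
    rw [real_inner_smul_left, real_inner_smul_right]
  have h4 : ‖(1-t)•a‖^2 = (1-t)^2 * ‖a‖^2 := by
    rw [norm_smul, mul_pow, Real.norm_eq_abs, sq_abs]
  have h5 : ‖t•b‖^2 = t^2 * ‖b‖^2 := by
    rw [norm_smul, mul_pow, Real.norm_eq_abs, sq_abs]
  have h6 : ⟪b, a⟫ = ⟪a, b⟫ := real_inner_comm a b
  rw [h1, h2, h3, h4, h5] at *
  nlinarith [h6]

/-- The guaranteed dual cost decrease at each iteration of the
majorization–minimization step:
`t̃g*(λ⁽ᵏ⁾) − t̃g*(λ⁽ᵏ⁺¹⁾) ≤ −t̃g*(λ⁽ᵏ⁺¹⁾; λ⁽ᵏ⁾) + t̃g*(λ⁽ᵏ⁾; λ⁽ᵏ⁾) + ε⁽ᵏ⁾‖λ⁽ᵏ⁺¹⁾ − λ⁽ᵏ⁾‖²`. -/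
theorem stmt13 {n r : ℕ} (m : ℝ) (hm : 0 < m) (g : Eu n → EReal)
    (hclosed : ClosedFn g) (hproper : ProperFn g) (hsc : StrongConvexFn m g)
    (K : Set (Eu r)) (hK : IsClosedConvexCone K)
    (φ : Eu n → Eu r) (hφ : ContDiff ℝ 1 φ) (hφK : KConvexFn K φ)
    (wst : Eu n) (hwst : wst ∈ edom g)
    (lamk : Eu r) (hlamk : lamk ∈ dualConeSet K)
    (epsk : ℝ) (hepsk : 0 < epsk)
    (wk : Eu n)
    (hwk : IsUniqueMin (fun w => g w + ((⟪lamk, φ w⟫ : ℝ) : EReal)) wk)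
    (lamk1 : Eu r) (hlamk1 : lamk1 ∈ dualConeSet K)
    (hmin : ∀ mu ∈ dualConeSet K,
      epsk * ‖lamk1 - lamk‖ ^ 2 - tsur g φ m wst lamk wk lamk1 ≤
        epsk * ‖mu - lamk‖ ^ 2 - tsur g φ m wst lamk wk mu) :
    tgR g φ wst lamk - tgR g φ wst lamk1 ≤
      -tsur g φ m wst lamk wk lamk1 + tsur g φ m wst lamk wk lamk +
        epsk * ‖lamk1 - lamk‖ ^ 2 := by
  classical
  have hφd : Differentiable ℝ φ := hφ.differentiable one_ne_zero
  set A := fderiv ℝ φ wk with hAdef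
  -- minimality of wk (non-strict, all points)
  have hle : ∀ z, g wk + ((⟪lamk, φ wk⟫ : ℝ) : EReal) ≤ g z + ((⟪lamk, φ z⟫ : ℝ) : EReal) := by
    intro z
    by_cases hz : z = wk
    · subst hz; exact le_refl _
    · exact (hwk z hz).le
  have hg_bot : ∀ x, g x ≠ ⊥ := fun x => (hproper.1 x).ne'
  have hwst_top : g wst < ⊤ := hwst
  have hhwk_top : g wk + ((⟪lamk, φ wk⟫ : ℝ) : EReal) < ⊤ :=
    lt_of_le_of_lt (hle wst) (EReal.add_lt_top hwst_top.ne (EReal.coe_lt_top _).ne)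
  have hgwk_top : g wk ≠ ⊤ := by
    intro h
    rw [h, EReal.top_add_coe] at hhwk_top
    exact absurd hhwk_top (lt_irrefl _)
  set Gwk : ℝ := (g wk).toReal with hGwkdef
  have hgwk : g wk = (Gwk : EReal) := (EReal.coe_toReal hgwk_top (hg_bot wk)).symm
  -- value of dual function at lamk
  have hdualk : dualFn g φ lamk = ((Gwk + ⟪lamk, φ wk⟫ : ℝ) : EReal) := by
    simp only [dualFn]
    apply le_antisymm
    · refine iInf_le_of_le wk ?_
      rw [hgwk, ← EReal.coe_add]
    · refine le_iInf fun z => ?_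
      have h := hle z
      rwa [hgwk, ← EReal.coe_add] at h
  -- the lower bound B
  set B : ℝ := Gwk + ⟪lamk, φ wk⟫ + ⟪lamk1 - lamk, φ wk⟫
      - 1 / (2 * m) * ‖(ContinuousLinearMap.adjoint A) (lamk1 - lamk)‖ ^ 2 with hBdef
  -- key pointwise bound
  have hkey : ∀ w : Eu n, (B : EReal) ≤ g w + ((⟪lamk1, φ w⟫ : ℝ) : EReal) := by
    intro w
    by_cases hgw : g w = ⊤
    · rw [hgw, EReal.top_add_coe]; exact le_top
    have hgwr : g w = (((g w).toReal : ℝ) : EReal) := (EReal.coe_toReal hgw (hg_bot w)).symm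
    set Gw : ℝ := (g w).toReal with hGwdef
    set v : Eu n := w - wk with hvdef
    set d : ℝ := ‖v‖ ^ 2 with hddef
    have hDφ : HasFDerivAt φ A wk := (hφd wk).hasFDerivAt
    have hD0 : HasFDerivAt (fun x => (⟪lamk, φ x⟫ : ℝ)) ((innerSL ℝ lamk).comp A) wk :=
      ((innerSL ℝ lamk).hasFDerivAt).comp wk hDφ
    have hD1 : HasFDerivAt (fun x => (⟪lamk1, φ x⟫ : ℝ)) ((innerSL ℝ lamk1).comp A) wk :=
      ((innerSL ℝ lamk1).hasFDerivAt).comp wk hDφ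
    have hf0 : fderiv ℝ (fun x => (⟪lamk, φ x⟫ : ℝ)) wk v
        = ⟪(ContinuousLinearMap.adjoint A) lamk, v⟫ := by
      rw [hD0.fderiv, ContinuousLinearMap.adjoint_inner_left]
      simp
    have hf1 : fderiv ℝ (fun x => (⟪lamk1, φ x⟫ : ℝ)) wk v
        = ⟪(ContinuousLinearMap.adjoint A) lamk1, v⟫ := by
      rw [hD1.fderiv, ContinuousLinearMap.adjoint_inner_left]
      simp
    -- Step (i): strong convexity + optimality bound on g
    have hGineq : Gwk + m / 2 * d - ⟪(ContinuousLinearMap.adjoint A) lamk, v⟫ ≤ Gw := by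
      have hslope := aux_slope_tendsto (fun x => (⟪lamk, φ x⟫ : ℝ)) wk v hD0.differentiableAt
      rw [hf0] at hslope
      have hc : Tendsto (fun t : ℝ => (1 - t) * (m / 2 * d)) (𝓝[>] (0:ℝ))
          (𝓝 ((1 - 0) * (m / 2 * d))) :=
        (((continuous_const.sub continuous_id).mul continuous_const).tendsto 0).mono_left
          nhdsWithin_le_nhds
      have hlim := hc.sub hslope
      have hev : ∀ᶠ t in 𝓝[>] (0:ℝ),
          (1 - t) * (m / 2 * d) - (⟪lamk, φ (wk + t • v)⟫ - ⟪lamk, φ wk⟫) / t ≤ Gw - Gwk := by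
        filter_upwards [Ioo_mem_nhdsGT_of_mem (Set.mem_Ico.mpr ⟨le_refl (0:ℝ), one_pos⟩)]
          with t ht
        -- the point z
        have hz2 : wk + t • v = t • w + (1 - t) • wk := by
          rw [hvdef, smul_sub, sub_smul, one_smul]; abel
        -- convexity of g - (m/2)‖·‖²
        have hF := hsc.2 w wk t (1 - t) ht.1.le (by linarith [ht.2]) (by ring)
        dsimp only at hF
        rw [hgwr, hgwk, ← EReal.coe_sub, ← EReal.coe_sub, ← EReal.coe_mul, ← EReal.coe_mul,
          ← EReal.coe_add] at hF
        have hgz_top : g (t • w + (1 - t) • wk) ≠ ⊤ := by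
          intro h
          rw [h, EReal.top_sub_coe] at hF
          exact EReal.coe_ne_top _ (top_le_iff.mp hF)
        have hgz : g (t • w + (1 - t) • wk)
            = (((g (t • w + (1 - t) • wk)).toReal : ℝ) : EReal) :=
          (EReal.coe_toReal hgz_top (hg_bot _)).symm
        set Gz : ℝ := (g (t • w + (1 - t) • wk)).toReal with hGzdef
        rw [hgz, ← EReal.coe_sub] at hF
        have hFr : Gz - m / 2 * ‖t • w + (1 - t) • wk‖ ^ 2
            ≤ t * (Gw - m / 2 * ‖w‖ ^ 2) + (1 - t) * (Gwk - m / 2 * ‖wk‖ ^ 2) :=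
          EReal.coe_le_coe_iff.mp hF
        -- minimality at z
        have hminz := hle (t • w + (1 - t) • wk)
        rw [hgwk, hgz, ← EReal.coe_add, ← EReal.coe_add] at hminz
        have hminzr : Gwk + ⟪lamk, φ wk⟫ ≤ Gz + ⟪lamk, φ (t • w + (1 - t) • wk)⟫ :=
          EReal.coe_le_coe_iff.mp hminz
        -- norm identity
        have hnorm : (1 - t) * ‖wk‖ ^ 2 + t * ‖w‖ ^ 2 - ‖(1 - t) • wk + t • w‖ ^ 2
            = t * (1 - t) * ‖w - wk‖ ^ 2 := aux_norm_combo wk w t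
        have hcomm : t • w + (1 - t) • wk = (1 - t) • wk + t • w := add_comm _ _
        rw [hcomm] at hFr hminzr
        have hGz_le : Gz ≤ t * Gw + (1 - t) * Gwk - m / 2 * (t * (1 - t) * d) := by
          have hd' : d = ‖w - wk‖ ^ 2 := by rw [hddef, hvdef]
          rw [hd']
          have hnorm2 : m / 2 * ((1 - t) * ‖wk‖ ^ 2 + t * ‖w‖ ^ 2 - ‖(1 - t) • wk + t • w‖ ^ 2)
              = m / 2 * (t * (1 - t) * ‖w - wk‖ ^ 2) := by rw [hnorm]
          linarith [hFr, hnorm2]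
        have hS : ((1 - t) * (m / 2 * d) - (Gw - Gwk)) * t
            ≤ ⟪lamk, φ ((1 - t) • wk + t • w)⟫ - ⟪lamk, φ wk⟫ := by
          linarith [hminzr, hGz_le]
        have hdiv := (le_div_iff₀ ht.1).mpr hS
        rw [hz2, hcomm]
        linarith [hdiv]
      have hfin := le_of_tendsto hlim hev
      simp only [sub_zero, one_mul] at hfin
      linarith [hfin]
    -- Step (ii): tangent bound for ψ1
    have h1ineq : ⟪(ContinuousLinearMap.adjoint A) lamk1, v⟫
        ≤ ⟪lamk1, φ w⟫ - ⟪lamk1, φ wk⟫ := by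
      have := aux_tangent_le (fun x => (⟪lamk1, φ x⟫ : ℝ)) wk w
        (aux_kconv_inner hlamk1 hφK) hD1.differentiableAt
      rwa [show w - wk = v from rfl, hf1] at this
    -- Step (iii): quadratic lower bound
    set u : Eu n := (ContinuousLinearMap.adjoint A) (lamk1 - lamk) with hudef
    have hu : ⟪u, v⟫ = ⟪(ContinuousLinearMap.adjoint A) lamk1, v⟫
        - ⟪(ContinuousLinearMap.adjoint A) lamk, v⟫ := by
      rw [hudef, map_sub, inner_sub_left]
    have hquad : 0 ≤ ⟪u, v⟫ + m / 2 * d + 1 / (2 * m) * ‖u‖ ^ 2 := by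
      have h0 : (0:ℝ) ≤ ‖u + m • v‖ ^ 2 := sq_nonneg _
      have hexp : ‖u + m • v‖ ^ 2 = ‖u‖ ^ 2 + 2 * (m * ⟪u, v⟫) + m ^ 2 * d := by
        rw [norm_add_sq_real, real_inner_smul_right, norm_smul, Real.norm_eq_abs,
          abs_of_pos hm, mul_pow, hddef]
      rw [hexp] at h0
      have h2m : (0:ℝ) < 2 * m := by linarith
      have heq : ⟪u, v⟫ + m / 2 * d + 1 / (2 * m) * ‖u‖ ^ 2
          = (‖u‖ ^ 2 + 2 * (m * ⟪u, v⟫) + m ^ 2 * d) / (2 * m) := by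
        field_simp
        ring
      rw [heq]
      exact div_nonneg h0 h2m.le
    -- combine
    have hwkinner : (⟪lamk1 - lamk, φ wk⟫ : ℝ) = ⟪lamk1, φ wk⟫ - ⟪lamk, φ wk⟫ :=
      inner_sub_left _ _ _
    have hfinal : B ≤ Gw + ⟪lamk1, φ w⟫ := by
      rw [hBdef, hwkinner]
      linarith [hGineq, h1ineq, hquad, hu]
    rw [hgwr, ← EReal.coe_add]
    exact_mod_cast hfinal
  -- lower bound on the dual at lamk1
  have hlb : (B : EReal) ≤ dualFn g φ lamk1 := by
    simp only [dualFn]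
    exact le_iInf hkey
  have hub : dualFn g φ lamk1 < ⊤ := by
    simp only [dualFn]
    exact lt_of_le_of_lt (iInf_le _ wst)
      (EReal.add_lt_top hwst_top.ne (EReal.coe_lt_top _).ne)
  have hBle : B ≤ (dualFn g φ lamk1).toReal := by
    have := EReal.toReal_le_toReal hlb (EReal.coe_ne_bot B) hub.ne
    simpa using this
  -- final assembly
  have htsurk : tsur g φ m wst lamk wk lamk = tgR g φ wst lamk := by
    simp [tsur, tgR]
  have h1 : tsur g φ m wst lamk wk lamk1 ≤ tgR g φ wst lamk1 := by
    simp only [tsur, tgR, hdualk, EReal.toReal_coe, ← hAdef]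
    rw [hBdef] at hBle
    linarith [hBle]
  have hnn : (0:ℝ) ≤ epsk * ‖lamk1 - lamk‖ ^ 2 := by positivity
  rw [htsurk]
  linarith [h1, hnn]
end
end
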